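/- arXiv:1609.03618 — 8 statements merged into one kernel-verified Lean document; each statement's English description precedes it below -/
import Mathlib

section
/- Let ∇ ⊆ ℝ^d be a compressed lattice polytope, let k > 1, let s ∈ k∇ ∩ ℤ^d, and let m ∈ ∇ ∩ ℤ^d. Then s − m ∈ (k−1)∇ if and only if supp(m) ⊆ supp(s), where supp(m) = {F facet : ⟨m, a_F⟩ > c_F} and supp(s) = {F facet : ⟨s, a_F⟩ > k c_F}. -/
open BigOperators Pointwise

/-- In a compressed lattice polytope, for `s ∈ kP ∩ ℤ^d` (`k > 1`) and a
lattice point `m` of `P`, `s − m ∈ (k−1)P` iff `supp m ⊆ supp s`. -/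
theorem divides_iff_support_subset_of_compressed
    (d : ℕ) (F : Type) [Fintype F]
    (a : F → Fin d → ℤ) (c : F → ℤ)
    (P : Set (Fin d → ℝ)) (V : Finset (Fin d → ℤ))
    (hlat : P = convexHull ℝ ((fun m : Fin d → ℤ => fun i => (m i : ℝ)) ''
      (V : Set (Fin d → ℤ))))
    (hfacet : P = {x : Fin d → ℝ | ∀ f : F, (c f : ℝ) ≤ ∑ i, x i * (a f i : ℝ)})
    (hprim : ∀ f : F, Finset.univ.gcd (a f) = 1)
    (hwidth : ∀ f : F, ∀ x ∈ P, ∑ i, x i * (a f i : ℝ) ≤ c f + 1)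
    (hwidth' : ∀ f : F, ∃ x ∈ P, ∑ i, x i * (a f i : ℝ) = c f + 1)
    (k : ℕ) (hk : 1 < k) (s m : Fin d → ℤ)
    (hs : (fun i => (s i : ℝ)) ∈ (k : ℝ) • P)
    (hm : (fun i => (m i : ℝ)) ∈ P) :
    (fun i => ((s i - m i : ℤ) : ℝ)) ∈ ((k : ℝ) - 1) • P ↔
      {f : F | (c f : ℝ) < ∑ i, (m i : ℝ) * (a f i : ℝ)}
        ⊆ {f : F | (k : ℝ) * c f < ∑ i, (s i : ℝ) * (a f i : ℝ)} := by
  -- membership in λ • P via facet inequalities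
  have key : ∀ (lam : ℝ), 0 < lam → ∀ x : Fin d → ℝ,
      (x ∈ lam • P ↔ ∀ f, lam * c f ≤ ∑ i, x i * (a f i : ℝ)) := by
    intro lam hlam x
    rw [Set.mem_smul_set_iff_inv_smul_mem₀ hlam.ne', hfacet]
    simp only [Set.mem_setOf_eq, Pi.smul_apply, smul_eq_mul]
    have hsum : ∀ f, ∑ i, lam⁻¹ * x i * (a f i : ℝ)
        = lam⁻¹ * ∑ i, x i * (a f i : ℝ) := by
      intro f; rw [Finset.mul_sum]; exact Finset.sum_congr rfl fun i _ => by ring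
    constructor
    · intro h f
      have := h f; rw [hsum f, le_inv_mul_iff₀ hlam] at this; exact this
    · intro h f
      rw [hsum f, le_inv_mul_iff₀ hlam]; exact h f
  have hk1 : (0:ℝ) < (k : ℝ) := by positivity
  have hk2 : (0:ℝ) < (k : ℝ) - 1 := by
    have : (2:ℝ) ≤ (k:ℝ) := by exact_mod_cast hk
    linarith
  have hsF : ∀ f, ((k:ℤ) * c f : ℤ) ≤ ∑ i, s i * a f i := by
    intro f
    have := (key k hk1 _).mp hs f
    exact_mod_cast this
  have hmF : ∀ f, (c f : ℤ) ≤ ∑ i, m i * a f i := by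
    intro f
    have h := hfacet ▸ hm
    have h2 : (c f:ℝ) ≤ ∑ i, ((m i:ℝ)) * (a f i : ℝ) := h f
    exact_mod_cast h2
  have hmF' : ∀ f, (∑ i, m i * a f i : ℤ) ≤ c f + 1 := by
    intro f
    have := hwidth f _ hm
    exact_mod_cast this
  rw [key _ hk2]
  constructor
  · intro h f hf
    have hf' : (c f : ℤ) < ∑ i, m i * a f i := by exact_mod_cast hf
    have hdiff : ((k:ℝ) - 1) * c f ≤ ∑ i, ((s i - m i : ℤ) : ℝ) * (a f i : ℝ) := h f
    have hdiff' : ((k:ℤ) - 1) * c f ≤ ∑ i, (s i - m i) * a f i := by exact_mod_cast hdiff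
    have hsplit : ∑ i, (s i - m i) * a f i
        = (∑ i, s i * a f i) - ∑ i, m i * a f i := by
      rw [← Finset.sum_sub_distrib]; exact Finset.sum_congr rfl fun i _ => by ring
    have : ((k:ℤ)) * c f < ∑ i, s i * a f i := by
      rw [hsplit, sub_mul, one_mul] at hdiff'
      linarith
    show ((k:ℝ)) * c f < ∑ i, (s i : ℝ) * (a f i : ℝ)
    exact_mod_cast this
  · intro h f
    have hsplit : ∑ i, (s i - m i) * a f i
        = (∑ i, s i * a f i) - ∑ i, m i * a f i := by
      rw [← Finset.sum_sub_distrib]; exact Finset.sum_congr rfl fun i _ => by ring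
    have goal : ((k:ℤ) - 1) * c f ≤ ∑ i, (s i - m i) * a f i := by
      rw [hsplit]
      by_cases hc : (c f : ℤ) < ∑ i, m i * a f i
      · have hfs : ((k:ℝ)) * c f < ∑ i, (s i : ℝ) * (a f i : ℝ) := by
          apply h
          show (c f : ℝ) < ∑ i, (m i : ℝ) * (a f i : ℝ)
          exact_mod_cast hc
        have hfs' : ((k:ℤ)) * c f < ∑ i, s i * a f i := by exact_mod_cast hfs
        have := hmF' f
        rw [sub_mul, one_mul]
        linarith
      · have hle : (∑ i, m i * a f i : ℤ) ≤ c f := by omega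
        have := hsF f
        rw [sub_mul, one_mul]
        linarith
    calc ((k:ℝ) - 1) * c f ≤ (((∑ i, (s i - m i) * a f i : ℤ)) : ℝ) := by exact_mod_cast goal
      _ = ∑ i, ((s i - m i : ℤ) : ℝ) * (a f i : ℝ) := by push_cast; rfl
end

section
/- Every compressed lattice polytope is normal: if ∇ ⊆ ℝ^d is a lattice polytope all of whose facet widths equal 1, then for every k ≥ 1 every lattice point of k∇ is a sum of k lattice points of ∇. -/
/-!
Induct on `k`. Given a lattice point `s ∈ (k + 1) P`, let `p = s / (k + 1) ∈ P`. Writing `p` as a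
convex combination of the vertices, any vertex `m` with positive weight lies on every facet
through `p`. Then `s - m ∈ k P`: on a facet through `p` we get `⟨s - m, a⟩ = (k + 1) c - c`, and on
any other facet `⟨s, a⟩ ≥ (k + 1) c + 1` by integrality while `⟨m, a⟩ ≤ c + 1` by compressedness.
-/

open Pointwise

section ConvexHull

variable {E ι : Type*} [AddCommGroup E] [Module ℝ E]

theorem Finset.exists_mem_forall_apply_eq_of_mem_convexHull {s : Finset E}
    (ℓ : ι → E →ₗ[ℝ] ℝ) (c : ι → ℝ) (hs : ∀ i, ∀ y ∈ s, c i ≤ ℓ i y) {p : E}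
    (hp : p ∈ convexHull ℝ (s : Set E)) :
    ∃ v ∈ s, ∀ i, ℓ i p = c i → ℓ i v = c i := by
  obtain ⟨w, hw₀, hw₁, rfl⟩ := Finset.mem_convexHull'.1 hp
  obtain ⟨v, hv, hwv⟩ : ∃ v ∈ s, 0 < w v :=
    Finset.exists_lt_of_sum_lt (by simp [hw₁] : ∑ _ ∈ s, (0 : ℝ) < ∑ y ∈ s, w y)
  refine ⟨v, hv, fun i hi => ?_⟩
  have hsum : ∑ y ∈ s, w y * (ℓ i y - c i) = ℓ i (∑ y ∈ s, w y • y) - c i := by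
    simp only [map_sum, map_smul, smul_eq_mul, mul_sub, Finset.sum_sub_distrib, ← Finset.sum_mul,
      hw₁, one_mul]
  rw [hi, sub_self] at hsum
  have hv0 := (Finset.sum_eq_zero_iff_of_nonneg fun y hy =>
    mul_nonneg (hw₀ y hy) (sub_nonneg.2 (hs i y hy))).1 hsum v hv
  exact sub_eq_zero.1 ((mul_eq_zero.1 hv0).resolve_left hwv.ne')

theorem mem_smul_setOf_forall_le_iff (ℓ : ι → E →ₗ[ℝ] ℝ) (c : ι → ℝ) {t : ℝ} (ht : 0 < t)
    {x : E} : x ∈ t • {y | ∀ i, c i ≤ ℓ i y} ↔ ∀ i, t * c i ≤ ℓ i x := by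
  simp only [Set.mem_smul_set_iff_inv_smul_mem₀ ht.ne', Set.mem_ofPred_eq, map_smul, smul_eq_mul,
    le_inv_mul_iff₀ ht]

end ConvexHull

section Lattice

variable {ι F : Type*} [Fintype ι]

def intDual (u : ι → ℤ) : (ι → ℝ) →ₗ[ℝ] ℝ :=
  (dotProductBilin ℝ ℝ).flip fun i => (u i : ℝ)

theorem intDual_apply (u : ι → ℤ) (x : ι → ℝ) : intDual u x = ∑ i, x i * (u i : ℝ) := rfl

theorem intDual_intCast (u m : ι → ℤ) :
    intDual u (fun i => (m i : ℝ)) = ((∑ i, m i * u i : ℤ) : ℝ) := by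
  simp [intDual_apply]

theorem exists_sub_mem_smul_of_mem_succ_smul (a : F → ι → ℤ) (c : F → ℤ)
    {P : Set (ι → ℝ)} {V : Finset (ι → ℤ)}
    (hlat : P = convexHull ℝ ((fun m : ι → ℤ => fun i => (m i : ℝ)) '' (V : Set (ι → ℤ))))
    (hfacet : P = {x : ι → ℝ | ∀ f : F, (c f : ℝ) ≤ ∑ i, x i * (a f i : ℝ)})
    (hwidth : ∀ f : F, ∀ x ∈ P, ∑ i, x i * (a f i : ℝ) ≤ c f + 1)
    {k : ℕ} (hk : 0 < k) {s : ι → ℤ} (hs : (fun i => (s i : ℝ)) ∈ ((k + 1 : ℕ) : ℝ) • P) :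
    ∃ m : ι → ℤ, (fun i => (m i : ℝ)) ∈ P ∧ (fun i => ((s - m) i : ℝ)) ∈ (k : ℝ) • P := by
  have hP : P = {x | ∀ f, (c f : ℝ) ≤ intDual (a f) x} := hfacet
  have hk₁ : (0 : ℝ) < ((k + 1 : ℕ) : ℝ) := by positivity
  have hpP := (Set.mem_smul_set_iff_inv_smul_mem₀ hk₁.ne' _ _).1 hs
  rw [hP, mem_smul_setOf_forall_le_iff _ _ hk₁] at hs
  have hVP : ∀ m ∈ V, (fun i => (m i : ℝ)) ∈ P := fun m hm =>
    hlat ▸ subset_convexHull ℝ _ (Set.mem_image_of_mem _ hm)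
  rw [hlat, ← Finset.coe_image] at hpP
  obtain ⟨_, hvV, hface⟩ := Finset.exists_mem_forall_apply_eq_of_mem_convexHull
    (fun f => intDual (a f)) (fun f => (c f : ℝ))
    (fun f y hy => by
      obtain ⟨m, hm, rfl⟩ := Finset.mem_image.1 hy
      exact (hP ▸ hVP m hm) f) hpP
  obtain ⟨m, hmV, rfl⟩ := Finset.mem_image.1 hvV
  refine ⟨m, hVP m hmV, ?_⟩
  rw [hP, mem_smul_setOf_forall_le_iff _ _ (by exact_mod_cast hk)]
  intro f
  have hσ := hs f
  have hμ : intDual (a f) (fun i => (m i : ℝ)) ≤ c f + 1 := hwidth f _ (hVP m hmV)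
  have htight := hface f
  rw [map_smul, smul_eq_mul, inv_mul_eq_iff_eq_mul₀ hk₁.ne'] at htight
  simp only [intDual_intCast, Pi.sub_apply, sub_mul, Finset.sum_sub_distrib] at hσ hμ htight ⊢
  norm_cast at hσ hμ htight ⊢
  push_cast at hσ htight
  rcases hσ.eq_or_lt with hσ | hσ
  · linarith [htight hσ.symm]
  · linarith [Int.add_one_le_of_lt hσ]

end Lattice

theorem compressed_is_normal_general
    (d : ℕ) (F : Type)
    (a : F → Fin d → ℤ) (c : F → ℤ)
    (P : Set (Fin d → ℝ)) (V : Finset (Fin d → ℤ))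
    (hlat : P = convexHull ℝ ((fun m : Fin d → ℤ => fun i => (m i : ℝ)) ''
      (V : Set (Fin d → ℤ))))
    (hfacet : P = {x : Fin d → ℝ | ∀ f : F, (c f : ℝ) ≤ ∑ i, x i * (a f i : ℝ)})
    (hwidth : ∀ f : F, ∀ x ∈ P, ∑ i, x i * (a f i : ℝ) ≤ c f + 1) :
    ∀ k : ℕ, 1 ≤ k → ∀ s : Fin d → ℤ, (fun i => (s i : ℝ)) ∈ (k : ℝ) • P →
      ∃ y : Fin k → (Fin d → ℤ), (∀ j, (fun i => (y j i : ℝ)) ∈ P) ∧ s = ∑ j, y j := by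
  intro k hk
  induction k, hk using Nat.le_induction with
  | base =>
    intro s hs
    exact ⟨fun _ => s, fun _ => by simpa using hs, by simp⟩
  | succ k hk ih =>
    intro s hs
    obtain ⟨m, hm, hsm⟩ := exists_sub_mem_smul_of_mem_succ_smul a c hlat hfacet hwidth hk hs
    obtain ⟨y, hy, hsum⟩ := ih (s - m) hsm
    refine ⟨Fin.cons m y, Fin.cases (by simpa using hm) (by simpa using hy), ?_⟩
    rw [Fin.sum_cons, ← hsum, add_sub_cancel]

/-- Every compressed lattice polytope is normal: each lattice point of a
dilate `kP` is a sum of `k` lattice points of `P`. -/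
theorem compressed_is_normal
    (d : ℕ) (F : Type) [Fintype F]
    (a : F → Fin d → ℤ) (c : F → ℤ)
    (P : Set (Fin d → ℝ)) (V : Finset (Fin d → ℤ))
    (hlat : P = convexHull ℝ ((fun m : Fin d → ℤ => fun i => (m i : ℝ)) ''
      (V : Set (Fin d → ℤ))))
    (hfacet : P = {x : Fin d → ℝ | ∀ f : F, (c f : ℝ) ≤ ∑ i, x i * (a f i : ℝ)})
    (hprim : ∀ f : F, Finset.univ.gcd (a f) = 1)
    (hwidth : ∀ f : F, ∀ x ∈ P, ∑ i, x i * (a f i : ℝ) ≤ c f + 1)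
    (hwidth' : ∀ f : F, ∃ x ∈ P, ∑ i, x i * (a f i : ℝ) = c f + 1) :
    ∀ k : ℕ, 1 ≤ k → ∀ s : Fin d → ℤ, (fun i => (s i : ℝ)) ∈ (k : ℝ) • P →
      ∃ y : Fin k → (Fin d → ℤ), (∀ j, (fun i => (y j i : ℝ)) ∈ P) ∧ s = ∑ j, y j :=
  compressed_is_normal_general d F a c P V hlat hfacet hwidth
end

section
/- Let Q be a quiver without oriented cycles and θ a weight such that ∇(Q,θ) is non-empty. Suppose v is a vertex of ∇(Q,θ) such that the graph with vertex set Q₀ and edge set supp(v) = {a ∈ Q₁ : v(a) ≠ 0} is connected (in the undirected sense). Then v is a smooth vertex of ∇(Q,θ), i.e. the ray generators of Cone(∇(Q,θ) − v) form part of a ℤ-basis of the ambient lattice intersected with the span of the cone. -/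
/-!
Let `Z` be the set of arcs on which `v` vanishes. Since the support of `v` connects all vertices,
every arc `a` closes up, through a path in the support of `v`, to an integral circulation `G a`
that restricts to the indicator of `a` on `Z`. At a vertex of the polytope there is no nonzero
circulation supported in the support of `v` (otherwise `v ± ε w` would both lie in the polytope),
so every circulation `x` equals `∑ a ∈ Z, x a • G a`. The cone of the polytope at `v` consists of
the circulations that are nonnegative on `Z`, hence it is generated by the `G a` with `a ∈ Z`;
being unitriangular on the coordinates `Z`, these form a `ℤ`-basis of the lattice points of
their span.
-/

open BigOperators

/-- The quiver polytope `∇(Q,θ)`. -/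
def quiverPolytope {Q0 Q1 : Type} [Fintype Q1] [DecidableEq Q0]
    (t h : Q1 → Q0) (θ : Q0 → ℤ) : Set (Q1 → ℝ) :=
  {x | (∀ a, 0 ≤ x a) ∧ ∀ v, (θ v : ℝ) =
    (∑ a, if h a = v then x a else 0) - ∑ a, if t a = v then x a else 0}

/-- `Q` has an oriented cycle. -/
def HasOrientedCycle {Q0 Q1 : Type} (t h : Q1 → Q0) : Prop :=
  ∃ (m : ℕ) (f : Fin (m + 1) → Q1), ∀ i, h (f i) = t (f (i + 1))

/-- A vertex `v` of a polytope `P ⊆ ℝ^ι` is smooth: the cone of `P` at `v` is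
generated by lattice vectors forming a `ℤ`-basis of the lattice points of its span. -/
def IsSmoothVertexOf {ι : Type} [Fintype ι] (P : Set (ι → ℝ)) (v : ι → ℝ) : Prop :=
  ∃ (r : ℕ) (g : Fin r → ι → ℤ),
    LinearIndependent ℝ (fun j => fun i => ((g j i : ℤ) : ℝ)) ∧
    {y : ι → ℝ | ∃ s : ℝ, 0 ≤ s ∧ ∃ x ∈ P, y = s • (x - v)}
      = {y | ∃ lam : Fin r → ℝ, (∀ j, 0 ≤ lam j) ∧
          y = ∑ j, lam j • fun i => ((g j i : ℤ) : ℝ)} ∧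
    ∀ p : ι → ℤ, (fun i => ((p i : ℤ) : ℝ)) ∈
        Submodule.span ℝ (Set.range fun j => fun i => ((g j i : ℤ) : ℝ)) →
      ∃ z : Fin r → ℤ, p = ∑ j, z j • g j

open Filter Topology in
theorem exists_pos_forall_nonneg_add_mul {ι : Type*} [Finite ι] {v y : ι → ℝ} (hv : 0 ≤ v)
    (hy : ∀ a, v a = 0 → 0 ≤ y a) : ∃ ε > 0, ∀ a, 0 ≤ v a + ε * y a := by
  have hev (a : ι) : ∀ᶠ ε in 𝓝[>] (0 : ℝ), 0 ≤ v a + ε * y a := by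
    rcases (hv a).eq_or_lt with h0 | hpos
    · filter_upwards [self_mem_nhdsWithin] with ε hε
      simpa [← h0] using mul_nonneg (le_of_lt hε) (hy a h0.symm)
    · have hlim : Tendsto (fun ε => v a + ε * y a) (𝓝[>] 0) (𝓝 (v a)) :=
        ((continuous_const.add (continuous_id.mul continuous_const)).tendsto' 0 (v a)
          (by simp)).mono_left nhdsWithin_le_nhds
      exact (hlim.eventually (lt_mem_nhds hpos)).mono fun _ => le_of_lt
  exact (eventually_mem_nhdsWithin.and (eventually_all.2 hev)).exists

theorem sum_smul_apply_of_comp_eq_single {κ ι R : Type*} [Fintype κ] [DecidableEq κ]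
    [Semiring R] {g : κ → ι → R} {c : κ → ι} (hgc : ∀ j, g j ∘ c = Pi.single j 1)
    (lam : κ → R) (k : κ) : (∑ j, lam j • g j) (c k) = lam k := by
  have hgck (j : κ) : g j (c k) = (Pi.single j 1 : κ → R) k := congrFun (hgc j) k
  simp [Finset.sum_apply, hgck, Pi.single_apply]

theorem comp_val_eq_single {ι M R : Type*} [DecidableEq ι] [Zero M] [Zero R] [One R]
    {v : ι → M} {G : ι → ι → R} (hGv : ∀ a, Set.EqOn (G a) (Pi.single a 1) (Function.support v)ᶜ)
    (a : {a // v a = 0}) : G a ∘ Subtype.val = Pi.single a 1 := by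
  ext b
  rw [Function.comp_apply, hGv a (Function.notMem_support.2 b.2)]
  simp only [Pi.single_apply, Subtype.ext_iff]

theorem isSmoothVertexOf_of_fintype {ι κ : Type} [Fintype ι] [Fintype κ] {P : Set (ι → ℝ)}
    {v : ι → ℝ} (g : κ → ι → ℤ) (hli : LinearIndependent ℝ fun j i => (g j i : ℝ))
    (hcone : {y : ι → ℝ | ∃ s : ℝ, 0 ≤ s ∧ ∃ x ∈ P, y = s • (x - v)} =
      {y | ∃ lam : κ → ℝ, (∀ j, 0 ≤ lam j) ∧ y = ∑ j, lam j • fun i => (g j i : ℝ)})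
    (hint : ∀ p : ι → ℤ, (fun i => (p i : ℝ)) ∈
      Submodule.span ℝ (Set.range fun j i => (g j i : ℝ)) → ∃ z : κ → ℤ, p = ∑ j, z j • g j) :
    IsSmoothVertexOf P v := by
  let e := (Fintype.equivFin κ).symm
  refine ⟨Fintype.card κ, g ∘ e, hli.comp e e.injective, ?_, fun p hp => ?_⟩
  · rw [hcone]
    ext y
    constructor
    · rintro ⟨lam, hlam, rfl⟩
      exact ⟨lam ∘ e, fun j => hlam _, (e.sum_comp fun j => lam j • _).symm⟩
    · rintro ⟨lam, hlam, rfl⟩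
      refine ⟨lam ∘ e.symm, fun j => hlam _, ?_⟩
      rw [← e.sum_comp]
      simp
  · obtain ⟨z, rfl⟩ := hint p (by rwa [← e.surjective.range_comp])
    exact ⟨z ∘ e, (e.sum_comp fun j => z j • g j).symm⟩

theorem isSmoothVertexOf_of_comp_eq_single {ι κ : Type} [Fintype ι] [Fintype κ] [DecidableEq κ]
    {P : Set (ι → ℝ)} {v : ι → ℝ} (g : κ → ι → ℤ) (c : κ → ι)
    (hgc : ∀ j, g j ∘ c = Pi.single j 1)
    (hcone : {y : ι → ℝ | ∃ s : ℝ, 0 ≤ s ∧ ∃ x ∈ P, y = s • (x - v)} =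
      {y | ∃ lam : κ → ℝ, (∀ j, 0 ≤ lam j) ∧ y = ∑ j, lam j • fun i => (g j i : ℝ)}) :
    IsSmoothVertexOf P v := by
  have hgcℝ (j : κ) : (fun i => (g j i : ℝ)) ∘ c = Pi.single j 1 := by
    ext k
    simpa [Pi.single_apply, apply_ite (Int.cast : ℤ → ℝ)] using
      congrArg (Int.cast : ℤ → ℝ) (congrFun (hgc j) k)
  have coeff (lam : κ → ℝ) (k : κ) := sum_smul_apply_of_comp_eq_single hgcℝ lam k
  refine isSmoothVertexOf_of_fintype g ?_ hcone fun p hp => ?_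
  · refine Fintype.linearIndependent_iff.2 fun lam hlam k => ?_
    simpa [coeff] using congrFun hlam (c k)
  · obtain ⟨lam, hlam⟩ := (Submodule.mem_span_range_iff_exists_fun ℝ).1 hp
    have hlamc (k : κ) : lam k = p (c k) := by rw [← coeff lam k, hlam]
    refine ⟨fun k => p (c k), funext fun b => Int.cast_injective (α := ℝ) ?_⟩
    simpa [Finset.sum_apply, hlamc] using (congrFun hlam b).symm

namespace QuiverPolytope

variable {Q0 Q1 : Type} [Fintype Q1] [DecidableEq Q0] (t h : Q1 → Q0)

/-- Inflow minus outflow, the sign convention of `quiverPolytope`. -/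
def divergence (R : Type*) [CommRing R] : (Q1 → R) →ₗ[R] (Q0 → R) where
  toFun x u := (∑ a, if h a = u then x a else 0) - ∑ a, if t a = u then x a else 0
  map_add' x y := by
    ext u
    simp only [Pi.add_apply, ite_add_zero, Finset.sum_add_distrib]
    abel
  map_smul' c x := by
    ext u
    simp only [Pi.smul_apply, smul_eq_mul, mul_ite, mul_zero, RingHom.id_apply, Finset.mul_sum,
      mul_sub]

theorem divergence_single (R : Type*) [CommRing R] [DecidableEq Q1] (a : Q1) :
    divergence t h R (Pi.single a 1) = Pi.single (h a) 1 - Pi.single (t a) 1 := by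
  ext u
  have (f : Q1 → Q0) :
      (∑ b, if f b = u then (Pi.single a 1 : Q1 → R) b else 0) = (Pi.single (f a) 1 : Q0 → R) u := by
    rw [Finset.sum_eq_single a (fun b _ hb => by simp [hb]) (by simp)]
    simp [Pi.single_apply, eq_comm]
  simp only [divergence, LinearMap.coe_mk, AddHom.coe_mk, this, Pi.sub_apply]

theorem divergence_comp_ringHom {R S : Type*} [CommRing R] [CommRing S] (f : R →+* S)
    (x : Q1 → R) : divergence t h S (fun a => f (x a)) = fun u => f (divergence t h R x u) := by
  ext u
  simp [divergence, map_sum, apply_ite f]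

def UndirectedAdj (S : Set Q1) (p q : Q0) : Prop :=
  ∃ a ∈ S, (t a = p ∧ h a = q) ∨ (t a = q ∧ h a = p)

variable {t h}

theorem mem_quiverPolytope_iff {θ : Q0 → ℤ} {x : Q1 → ℝ} :
    x ∈ quiverPolytope t h θ ↔ 0 ≤ x ∧ divergence t h ℝ x = fun u => (θ u : ℝ) :=
  and_congr Iff.rfl ((forall_congr' fun _ => eq_comm).trans funext_iff.symm)

theorem exists_int_flow_of_reflTransGen [DecidableEq Q1] {S : Set Q1} {p q : Q0}
    (hpq : Relation.ReflTransGen (UndirectedAdj t h S) p q) :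
    ∃ w : Q1 → ℤ, Function.support w ⊆ S ∧
      divergence t h ℤ w = Pi.single q 1 - Pi.single p 1 := by
  induction hpq with
  | refl => exact ⟨0, by simp, by simp⟩
  | tail _ hqr ih =>
    obtain ⟨w, hwS, hw⟩ := ih
    obtain ⟨a, haS, hor⟩ := hqr
    have hsingle : Function.support (Pi.single a 1 : Q1 → ℤ) ⊆ S :=
      Pi.support_single_subset.trans (Set.singleton_subset_iff.2 haS)
    rcases hor with ⟨rfl, rfl⟩ | ⟨rfl, rfl⟩
    · refine ⟨w + Pi.single a 1,
        (Function.support_add _ _).trans (Set.union_subset hwS hsingle), ?_⟩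
      rw [map_add, hw, divergence_single]
      abel
    · refine ⟨w - Pi.single a 1,
        (Function.support_sub _ _).trans (Set.union_subset hwS hsingle), ?_⟩
      rw [map_sub, hw, divergence_single]
      abel

theorem exists_fundamental_circulations [DecidableEq Q1] {S : Set Q1}
    (hS : ∀ p q, Relation.ReflTransGen (UndirectedAdj t h S) p q) :
    ∃ G : Q1 → Q1 → ℤ, ∀ a, divergence t h ℤ (G a) = 0 ∧ Set.EqOn (G a) (Pi.single a 1) Sᶜ := by
  choose W hWS hW using fun a => exists_int_flow_of_reflTransGen (hS (h a) (t a))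
  refine ⟨fun a => Pi.single a 1 + W a, fun a => ⟨?_, fun b hb => ?_⟩⟩
  · rw [map_add, divergence_single, hW]
    abel
  · simp [Function.notMem_support.1 fun hb' => hb (hWS a hb')]

variable {θ : Q0 → ℤ} {v : Q1 → ℝ}

theorem cone_eq (hv : v ∈ quiverPolytope t h θ) :
    {y : Q1 → ℝ | ∃ s : ℝ, 0 ≤ s ∧ ∃ x ∈ quiverPolytope t h θ, y = s • (x - v)} =
      {y | divergence t h ℝ y = 0 ∧ ∀ a, v a = 0 → 0 ≤ y a} := by
  rw [mem_quiverPolytope_iff] at hv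
  ext y
  constructor
  · rintro ⟨s, hs, x, hx, rfl⟩
    rw [mem_quiverPolytope_iff] at hx
    refine ⟨by rw [map_smul, map_sub, hx.2, hv.2, sub_self, smul_zero], fun a ha => ?_⟩
    simpa [ha] using mul_nonneg hs (hx.1 a)
  · rintro ⟨hy, hy0⟩
    obtain ⟨ε, hε, hvy⟩ := exists_pos_forall_nonneg_add_mul hv.1 hy0
    refine ⟨ε⁻¹, inv_nonneg.2 hε.le, v + ε • y, mem_quiverPolytope_iff.2 ⟨hvy, ?_⟩, ?_⟩
    · rw [map_add, map_smul, hy, smul_zero, add_zero, hv.2]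
    · rw [add_sub_cancel_left, inv_smul_smul₀ hε.ne']

theorem eq_zero_of_support_subset_of_divergence_eq_zero {w : Q1 → ℝ}
    (hv : v ∈ Set.extremePoints ℝ (quiverPolytope t h θ)) (hw : divergence t h ℝ w = 0)
    (hwv : Function.support w ⊆ Function.support v) : w = 0 := by
  obtain ⟨hv0, hvθ⟩ := mem_quiverPolytope_iff.1 hv.1
  obtain ⟨ε, hε, hvw⟩ := exists_pos_forall_nonneg_add_mul (y := fun a => -|w a|) hv0
    fun a ha => by simp [Function.notMem_support.1 fun hwa => hwv hwa ha]
  have hmem (σ : ℝ) (hσ : |σ| = 1) : v + (σ * ε) • w ∈ quiverPolytope t h θ := by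
    refine mem_quiverPolytope_iff.2 ⟨fun a => ?_, ?_⟩
    · have := neg_abs_le (σ * ε * w a)
      rw [abs_mul, abs_mul, hσ, abs_of_pos hε] at this
      simp only [Pi.zero_apply, Pi.add_apply, Pi.smul_apply, smul_eq_mul]
      linarith [hvw a]
    · rw [map_add, map_smul, hw, smul_zero, add_zero, hvθ]
  have := hv.2 (hmem 1 (by simp)) (hmem (-1) (by simp))
    (by simpa [sub_eq_add_neg] using mem_openSegment_add_sub v (ε • w))
  simpa [hε.ne'] using this

variable [DecidableEq Q1] {G : Q1 → Q1 → ℝ}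

theorem eq_sum_smul_of_divergence_eq_zero (hv : v ∈ Set.extremePoints ℝ (quiverPolytope t h θ))
    (hG : ∀ a, divergence t h ℝ (G a) = 0)
    (hGv : ∀ a, Set.EqOn (G a) (Pi.single a 1) (Function.support v)ᶜ)
    {x : Q1 → ℝ} (hx : divergence t h ℝ x = 0) :
    x = ∑ a : {a // v a = 0}, x a • G a := by
  rw [← sub_eq_zero]
  refine eq_zero_of_support_subset_of_divergence_eq_zero hv (by simp [hx, hG])
    fun b hb hvb => hb ?_
  rw [Pi.sub_apply, sub_eq_zero]
  exact (sum_smul_apply_of_comp_eq_single (comp_val_eq_single hGv) (fun a => x a) ⟨b, hvb⟩).symm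

theorem cone_eq_of_mem_extremePoints (hv : v ∈ Set.extremePoints ℝ (quiverPolytope t h θ))
    (hG : ∀ a, divergence t h ℝ (G a) = 0)
    (hGv : ∀ a, Set.EqOn (G a) (Pi.single a 1) (Function.support v)ᶜ) :
    {y | divergence t h ℝ y = 0 ∧ ∀ a, v a = 0 → 0 ≤ y a} =
      {y | ∃ lam : {a // v a = 0} → ℝ, (∀ a, 0 ≤ lam a) ∧ y = ∑ a, lam a • G a} := by
  ext y
  constructor
  · rintro ⟨hy, hy0⟩
    exact ⟨fun a => y a, fun a => hy0 a a.2, eq_sum_smul_of_divergence_eq_zero hv hG hGv hy⟩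
  · rintro ⟨lam, hlam, rfl⟩
    refine ⟨by simp [hG], fun b hb => ?_⟩
    rw [sum_smul_apply_of_comp_eq_single (comp_val_eq_single hGv) lam ⟨b, hb⟩]
    exact hlam _

end QuiverPolytope

theorem smooth_of_connected_support_general
    (Q0 Q1 : Type) [Fintype Q1] [DecidableEq Q0]
    (t h : Q1 → Q0)
    (θ : Q0 → ℤ)
    (v : Q1 → ℝ)
    (hvert : v ∈ Set.extremePoints ℝ (quiverPolytope t h θ))
    (hconn : ∀ p q : Q0, Relation.ReflTransGen
      (fun p q => ∃ a : Q1, v a ≠ 0 ∧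
        ((t a = p ∧ h a = q) ∨ (t a = q ∧ h a = p))) p q) :
    IsSmoothVertexOf (quiverPolytope t h θ) v := by
  classical
  obtain ⟨G, hG⟩ := QuiverPolytope.exists_fundamental_circulations (S := Function.support v) hconn
  have hGℝ (a : Q1) : QuiverPolytope.divergence t h ℝ (fun b => (G a b : ℝ)) = 0 := by
    rw [show (fun b => (G a b : ℝ)) = fun b => Int.castRingHom ℝ (G a b) from rfl,
      QuiverPolytope.divergence_comp_ringHom, (hG a).1]
    ext
    simp
  have hGℝv (a : Q1) :
      Set.EqOn (fun b => (G a b : ℝ)) (Pi.single a 1) (Function.support v)ᶜ := fun b hb => by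
    simp [(hG a).2 hb, Pi.single_apply, apply_ite (Int.cast : ℤ → ℝ)]
  refine isSmoothVertexOf_of_comp_eq_single (fun a : {a // v a = 0} => G a) Subtype.val
    (comp_val_eq_single fun a => (hG a).2) ?_
  rw [QuiverPolytope.cone_eq hvert.1,
    QuiverPolytope.cone_eq_of_mem_extremePoints (G := fun a b => (G a b : ℝ)) hvert hGℝ hGℝv]

/-- a vertex of a quiver polytope whose support is connected as an
undirected subgraph is a smooth vertex. -/
theorem smooth_of_connected_support
    (Q0 Q1 : Type) [Fintype Q0] [Fintype Q1] [DecidableEq Q0] [Nonempty Q0]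
    (t h : Q1 → Q0) (hacyc : ¬ HasOrientedCycle t h)
    (θ : Q0 → ℤ) (hnon : (quiverPolytope t h θ).Nonempty)
    (v : Q1 → ℝ)
    (hvert : v ∈ Set.extremePoints ℝ (quiverPolytope t h θ))
    (hconn : ∀ p q : Q0, Relation.ReflTransGen
      (fun p q => ∃ a : Q1, v a ≠ 0 ∧
        ((t a = p ∧ h a = q) ∨ (t a = q ∧ h a = p))) p q) :
    IsSmoothVertexOf (quiverPolytope t h θ) v :=
  smooth_of_connected_support_general Q0 Q1 t h θ v hvert hconn
end

section
/- Let ∇ be a normal lattice polytope with lattice points m₁,…,m_k, and for s ∈ S(∇)_r define the relation ∼_s on {m ∈ ∇∩ℤ^d : (m,1) divides s in S(∇)} as the transitive closure of: m ∼*_s m' iff m = m' or (m + m', 2) divides s. Then the toric ideal I(∇) is generated by its elements of degree at most r if and only if for every r' > r and every s ∈ S(∇)_{r'}, the relation ∼_s has exactly one equivalence class. -/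
open BigOperators Pointwise

/-- The toric ideal associated to a family of lattice points `m : ι → M`. -/
noncomputable def toricIdeal {ι M : Type} [AddCommMonoid M] (m : ι → M) :
    Ideal (MvPolynomial ι ℂ) :=
  RingHom.ker (MvPolynomial.aeval
    (fun i => (AddMonoidAlgebra.single ((m i, 1) : M × ℤ) (1 : ℂ) :
      AddMonoidAlgebra ℂ (M × ℤ)))).toRingHom

/-- An ideal of a polynomial ring is generated in degree at most `r`. -/
def GeneratedInDegreeLE {ι : Type} (I : Ideal (MvPolynomial ι ℂ)) (r : ℕ) : Prop :=
  I = Ideal.span {p : MvPolynomial ι ℂ | p ∈ I ∧ p.totalDegree ≤ r}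

/-!
Write `toricDegree m u = ∑ uᵢ • (mᵢ, 1)` for an exponent vector `u`. The toric ideal is spanned
by the binomials `x^u - x^v` with `toricDegree m u = toricDegree m v`. It is generated in degree
`≤ r` iff any two such monomials are joined by moves `x^(w+a) ↝ x^(w+b)` with `deg a ≤ r`: each
move is a multiple of a binomial of degree `≤ r`; conversely, pairing coefficients with the
indicator of the monomials reachable from `x^u` kills the ideal generated in degree `≤ r` (within
each fiber of an element of degree `≤ r` the indicator is constant) but not `x^u - x^v` unless
`x^v` is reachable.

For a target of degree `n > r`, a move of degree `≤ r` keeps a common variable, so along a chain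
of moves all variables are linked by `∼ₛ`. Conversely a `∼ₛ`-step `b ∼ c` yields a factorization
containing `b` and `c`; two factorizations sharing a variable `b` are joined by moves, by induction
on the degree after cancelling `x_b`. Normality identifies the lattice points of `n • ∇` with the
toric degrees of monomials of degree `n`.
-/

namespace Finsupp

variable {ι : Type*}

theorem exists_eq_single_add_of_mem_support {u : ι →₀ ℕ} {i : ι} (hi : i ∈ u.support) :
    ∃ u', u = single i 1 + u' :=
  exists_add_of_le (single_le_iff.mpr (Nat.one_le_iff_ne_zero.mpr (mem_support_iff.mp hi)))

theorem mem_support_add_left {u : ι →₀ ℕ} {i : ι} (hi : i ∈ u.support) (v : ι →₀ ℕ) :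
    i ∈ (u + v).support := by
  classical
  rw [support_add_eq_union]
  exact Finset.mem_union_left _ hi

theorem mem_support_add_right {v : ι →₀ ℕ} {i : ι} (hi : i ∈ v.support) (u : ι →₀ ℕ) :
    i ∈ (u + v).support :=
  add_comm v u ▸ mem_support_add_left hi u

theorem mem_support_single_one_add (i : ι) (u : ι →₀ ℕ) : i ∈ (single i 1 + u).support :=
  mem_support_add_left (by simp) u

end Finsupp

open MvPolynomial

section Toric

variable {ι M : Type} [AddCommMonoid M] (m : ι → M)

noncomputable def toricDegree : (ι →₀ ℕ) →ₗ[ℕ] M × ℤ :=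
  Finsupp.linearCombination ℕ fun i => ((m i, 1) : M × ℤ)

theorem toricDegree_single (i : ι) (n : ℕ) :
    toricDegree m (Finsupp.single i n) = n • ((m i, 1) : M × ℤ) :=
  Finsupp.linearCombination_single ℕ n i

theorem toricDegree_single_one_add (i : ι) (u : ι →₀ ℕ) :
    toricDegree m (Finsupp.single i 1 + u) = (m i, 1) + toricDegree m u := by
  rw [map_add, toricDegree_single, one_smul]

theorem toricDegree_snd (u : ι →₀ ℕ) : (toricDegree m u).2 = u.degree := by
  induction u using Finsupp.induction_linear with
  | zero => simp
  | add u v hu hv => simp [hu, hv]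
  | single i n => simp [toricDegree_single]

theorem degree_eq_of_toricDegree_eq {u v : ι →₀ ℕ} (h : toricDegree m u = toricDegree m v) :
    u.degree = v.degree := by
  have := congrArg Prod.snd h
  rwa [toricDegree_snd, toricDegree_snd, Nat.cast_inj] at this

theorem aeval_toric_eq_mapDomain (p : MvPolynomial ι ℂ) :
    aeval (fun i => AddMonoidAlgebra.single ((m i, 1) : M × ℤ) (1 : ℂ)) p =
      AddMonoidAlgebra.mapDomain (toricDegree m) p := by
  have : aeval (fun i => AddMonoidAlgebra.single ((m i, 1) : M × ℤ) (1 : ℂ)) =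
      AddMonoidAlgebra.mapDomainAlgHom ℂ ℂ (toricDegree m).toAddMonoidHom := by
    refine MvPolynomial.algHom_ext fun i => ?_
    rw [aeval_X, AddMonoidAlgebra.mapDomainAlgHom_apply, X, ← single_eq_monomial,
      AddMonoidAlgebra.mapDomain_single]
    simp [toricDegree_single]
  rw [this]; rfl

theorem sum_coeff_fiber_eq_zero [DecidableEq M] {p : MvPolynomial ι ℂ} (hp : p ∈ toricIdeal m)
    (v : ι →₀ ℕ) : ∑ w ∈ p.support with toricDegree m w = toricDegree m v, coeff w p = 0 := by
  have h0 : aeval (fun i => AddMonoidAlgebra.single ((m i, 1) : M × ℤ) (1 : ℂ)) p = 0 := hp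
  rw [aeval_toric_eq_mapDomain] at h0
  have := congrArg (fun q => q.coeff (toricDegree m v)) h0
  simp only [AddMonoidAlgebra.coeff_mapDomain] at this
  rwa [Finsupp.mapDomain_apply_eq_sum] at this

theorem monomial_sub_monomial_mem_toricIdeal {u v : ι →₀ ℕ}
    (h : toricDegree m u = toricDegree m v) :
    monomial u (1 : ℂ) - monomial v 1 ∈ toricIdeal m := by
  change aeval _ (monomial u (1 : ℂ) - monomial v 1) = 0
  rw [map_sub, aeval_toric_eq_mapDomain, aeval_toric_eq_mapDomain, ← single_eq_monomial,
    ← single_eq_monomial, AddMonoidAlgebra.mapDomain_single, AddMonoidAlgebra.mapDomain_single,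
    h, sub_self]

theorem toricIdeal_le_of_monomial_sub_monomial_mem {J : Ideal (MvPolynomial ι ℂ)}
    (hJ : ∀ u v, toricDegree m u = toricDegree m v → monomial u (1 : ℂ) - monomial v 1 ∈ J) :
    toricIdeal m ≤ J := by
  classical
  intro p hp
  set ρ := Function.invFun (toricDegree m)
  have hρ (v : ι →₀ ℕ) : toricDegree m (ρ (toricDegree m v)) = toricDegree m v :=
    Function.invFun_eq ⟨v, rfl⟩
  have hfiber : ∑ v ∈ p.support, coeff v p • monomial (ρ (toricDegree m v)) (1 : ℂ) = 0 := by
    rw [← Finset.sum_fiberwise_of_maps_to fun v hv => Finset.mem_image_of_mem (toricDegree m) hv]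
    refine Finset.sum_eq_zero fun g hg => ?_
    obtain ⟨v, -, rfl⟩ := Finset.mem_image.mp hg
    rw [Finset.sum_congr rfl fun w hw => by rw [(Finset.mem_filter.mp hw).2], ← Finset.sum_smul,
      sum_coeff_fiber_eq_zero m hp v, zero_smul]
  have hsplit : p =
      ∑ v ∈ p.support, coeff v p • (monomial v 1 - monomial (ρ (toricDegree m v)) 1) +
        ∑ v ∈ p.support, coeff v p • monomial (ρ (toricDegree m v)) (1 : ℂ) := by
    simp_rw [← Finset.sum_add_distrib, smul_sub, sub_add_cancel, smul_monomial, smul_eq_mul,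
      mul_one]
    exact p.as_sum
  rw [hsplit, hfiber, add_zero]
  exact J.sum_mem fun v _ => Submodule.smul_of_tower_mem _ _ (hJ _ _ (hρ v).symm)

def ToricMove (r : ℕ) (u v : ι →₀ ℕ) : Prop :=
  ∃ w a b, u = w + a ∧ v = w + b ∧ toricDegree m a = toricDegree m b ∧ a.degree ≤ r

variable {m} {r : ℕ}

theorem ToricMove.symm {u v : ι →₀ ℕ} (h : ToricMove m r u v) : ToricMove m r v u := by
  obtain ⟨w, a, b, rfl, rfl, hab, hr⟩ := h
  exact ⟨w, b, a, rfl, rfl, hab.symm, degree_eq_of_toricDegree_eq m hab ▸ hr⟩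

theorem ToricMove.add_left {u v : ι →₀ ℕ} (h : ToricMove m r u v) (e : ι →₀ ℕ) :
    ToricMove m r (e + u) (e + v) := by
  obtain ⟨w, a, b, rfl, rfl, hab, hr⟩ := h
  exact ⟨e + w, a, b, (add_assoc e w a).symm, (add_assoc e w b).symm, hab, hr⟩

theorem ToricMove.toricDegree_eq {u v : ι →₀ ℕ} (h : ToricMove m r u v) :
    toricDegree m u = toricDegree m v := by
  obtain ⟨w, a, b, rfl, rfl, hab, -⟩ := h
  rw [map_add, map_add, hab]

theorem toricDegree_eq_of_reflTransGen {u v : ι →₀ ℕ}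
    (h : Relation.ReflTransGen (ToricMove m r) u v) : toricDegree m u = toricDegree m v := by
  induction h with
  | refl => rfl
  | tail _ hmove ih => exact ih.trans hmove.toricDegree_eq

theorem reflTransGen_toricMove_add_left {u v : ι →₀ ℕ}
    (h : Relation.ReflTransGen (ToricMove m r) u v) (e : ι →₀ ℕ) :
    Relation.ReflTransGen (ToricMove m r) (e + u) (e + v) :=
  Relation.ReflTransGen.lift (e + ·) (fun _ _ hmove => hmove.add_left e) _ _ h

theorem totalDegree_monomial_sub_monomial_le {u v : ι →₀ ℕ} (h : u.degree = v.degree) :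
    (monomial u (1 : ℂ) - monomial v 1).totalDegree ≤ u.degree := by
  refine (totalDegree_sub _ _).trans (max_le ?_ ?_)
  · exact (totalDegree_monomial_le _ _).trans_eq (Finsupp.degree_apply u).symm
  · exact (totalDegree_monomial_le _ _).trans_eq ((Finsupp.degree_apply v).symm.trans h.symm)

theorem monomial_sub_monomial_mem_span_of_reflTransGen {u v : ι →₀ ℕ}
    (h : Relation.ReflTransGen (ToricMove m r) u v) :
    monomial u (1 : ℂ) - monomial v 1 ∈
      Ideal.span {p | p ∈ toricIdeal m ∧ p.totalDegree ≤ r} := by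
  induction h with
  | refl => rw [sub_self]; exact zero_mem _
  | @tail v v' _ hmove ih =>
    obtain ⟨w, a, b, rfl, rfl, hab, hr⟩ := hmove
    have hgen : monomial a (1 : ℂ) - monomial b 1 ∈
        Ideal.span {p | p ∈ toricIdeal m ∧ p.totalDegree ≤ r} :=
      Ideal.subset_span ⟨monomial_sub_monomial_mem_toricIdeal m hab,
        (totalDegree_monomial_sub_monomial_le (degree_eq_of_toricDegree_eq m hab)).trans hr⟩
    have hfactor : monomial (w + a) (1 : ℂ) - monomial (w + b) 1 =
        monomial w 1 * (monomial a 1 - monomial b 1) := by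
      rw [mul_sub, monomial_mul, monomial_mul, one_mul]
    rw [← sub_add_sub_cancel, hfactor]
    exact add_mem ih (Ideal.mul_mem_left _ _ hgen)

end Toric

section Pairing

variable {ι M : Type} [AddCommMonoid M] {m : ι → M} {r : ℕ}

noncomputable def coeffPairing (χ : (ι →₀ ℕ) → ℂ) : MvPolynomial ι ℂ →ₗ[ℂ] ℂ :=
  Finsupp.linearCombination ℂ χ ∘ₗ (AddMonoidAlgebra.coeffLinearEquiv ℂ).toLinearMap

theorem coeffPairing_monomial (χ : (ι →₀ ℕ) → ℂ) (v : ι →₀ ℕ) (c : ℂ) :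
    coeffPairing χ (monomial v c) = c * χ v := by
  rw [← single_eq_monomial]
  exact Finsupp.linearCombination_single ℂ c v

theorem coeffPairing_monomial_mul_eq_zero {χ : (ι →₀ ℕ) → ℂ}
    (hχ : ∀ u v, ToricMove m r u v → χ u = χ v) {p : MvPolynomial ι ℂ}
    (hp : p ∈ toricIdeal m) (hdeg : p.totalDegree ≤ r) (w : ι →₀ ℕ) :
    coeffPairing χ (monomial w 1 * p) = 0 := by
  classical
  have hexpand : monomial w (1 : ℂ) * p = ∑ v ∈ p.support, monomial (w + v) (coeff v p) := by
    conv_lhs => rw [p.as_sum, Finset.mul_sum]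
    simp_rw [monomial_mul, one_mul]
  rw [hexpand, map_sum, ← Finset.sum_fiberwise_of_maps_to
    fun v hv => Finset.mem_image_of_mem (toricDegree m) hv]
  refine Finset.sum_eq_zero fun g hg => ?_
  obtain ⟨v₀, -, rfl⟩ := Finset.mem_image.mp hg
  -- all monomials of a fiber of `p` are linked by a single move, so `χ` is constant on it
  have hconst : ∀ v ∈ p.support.filter (toricDegree m · = toricDegree m v₀),
      coeffPairing χ (monomial (w + v) (coeff v p)) = coeff v p * χ (w + v₀) := by
    intro v hv
    obtain ⟨hv, hvv₀⟩ := Finset.mem_filter.mp hv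
    rw [coeffPairing_monomial]
    exact congrArg _ (hχ _ _ ⟨w, v, v₀, rfl, rfl, hvv₀, (le_totalDegree hv).trans hdeg⟩)
  rw [Finset.sum_congr rfl hconst, ← Finset.sum_mul, sum_coeff_fiber_eq_zero m hp v₀, zero_mul]

theorem coeffPairing_eq_zero_of_mem_span {χ : (ι →₀ ℕ) → ℂ}
    (hχ : ∀ u v, ToricMove m r u v → χ u = χ v) {x : MvPolynomial ι ℂ}
    (hx : x ∈ Ideal.span {p | p ∈ toricIdeal m ∧ p.totalDegree ≤ r}) :
    coeffPairing χ x = 0 := by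
  suffices ∀ q, coeffPairing χ (q * x) = 0 by simpa using this 1
  induction hx using Submodule.span_induction with
  | mem p hp =>
    intro q
    conv_lhs => rw [q.as_sum, Finset.sum_mul, map_sum]
    refine Finset.sum_eq_zero fun w _ => ?_
    have hscale : monomial w (coeff w q) = coeff w q • monomial w (1 : ℂ) := by
      rw [smul_monomial, smul_eq_mul, mul_one]
    rw [hscale, smul_mul_assoc, map_smul, coeffPairing_monomial_mul_eq_zero hχ hp.1 hp.2,
      smul_zero]
  | zero => simp
  | add x y _ _ hx hy => intro q; rw [mul_add, map_add, hx, hy, add_zero]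
  | smul a x _ hx => intro q; rw [smul_eq_mul, ← mul_assoc, hx]

theorem reflTransGen_toricMove_of_generatedInDegreeLE (hgen : GeneratedInDegreeLE (toricIdeal m) r)
    {u v : ι →₀ ℕ} (huv : toricDegree m u = toricDegree m v) :
    Relation.ReflTransGen (ToricMove m r) u v := by
  classical
  set χ : (ι →₀ ℕ) → ℂ := fun w => if Relation.ReflTransGen (ToricMove m r) u w then 1 else 0
  have hχ : ∀ w w', ToricMove m r w w' → χ w = χ w' := fun w w' hmove =>
    if_congr ⟨fun h => h.tail hmove, fun h => h.tail hmove.symm⟩ rfl rfl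
  have hzero := coeffPairing_eq_zero_of_mem_span hχ
    (hgen ▸ monomial_sub_monomial_mem_toricIdeal m huv)
  rw [map_sub, coeffPairing_monomial, coeffPairing_monomial, one_mul, one_mul, sub_eq_zero] at hzero
  simp only [χ, if_pos Relation.ReflTransGen.refl] at hzero
  by_contra hv
  rw [if_neg hv] at hzero
  exact one_ne_zero hzero

theorem generatedInDegreeLE_toricIdeal_iff :
    GeneratedInDegreeLE (toricIdeal m) r ↔
      ∀ u v, toricDegree m u = toricDegree m v → Relation.ReflTransGen (ToricMove m r) u v :=
  ⟨fun hgen _ _ => reflTransGen_toricMove_of_generatedInDegreeLE hgen, fun h =>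
    le_antisymm
      (toricIdeal_le_of_monomial_sub_monomial_mem m fun u v huv =>
        monomial_sub_monomial_mem_span_of_reflTransGen (h u v huv))
      (Ideal.span_le.mpr fun _ hp => hp.1)⟩

end Pairing

section Linked

variable {ι M : Type} [AddCommMonoid M] (m : ι → M)

/-- For `g = (s, n)`, `ToricLinked m g i j` says that `m i` and `m j` both occur in one
factorization of `s` into `n` of the points `m`: for `i ≠ j` this is `(m i + m j, 2) ∣ g`, and
`ToricLinked m g i i` is `(m i, 1) ∣ g`. -/
def ToricLinked (g : M × ℤ) (i j : ι) : Prop :=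
  ∃ u, toricDegree m u = g ∧ i ∈ u.support ∧ j ∈ u.support

variable {m} {r : ℕ}

theorem reflTransGen_toricLinked_of_reflTransGen_toricMove {u v : ι →₀ ℕ}
    (huv : Relation.ReflTransGen (ToricMove m r) u v) (hr : r < u.degree) {i j : ι}
    (hi : i ∈ u.support) (hj : j ∈ v.support) :
    Relation.ReflTransGen (ToricLinked m (toricDegree m u)) i j := by
  induction huv generalizing j with
  | refl => exact .single ⟨u, rfl, hi, hj⟩
  | @tail x y hux hmove ih =>
    have hxy := hmove.toricDegree_eq
    obtain ⟨w, a, b, rfl, rfl, -, ha⟩ := hmove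
    have hux' := toricDegree_eq_of_reflTransGen hux
    -- a move of degree `≤ r` inside a monomial of degree `> r` keeps a common variable `t`
    have hw : w ≠ 0 := by
      rintro rfl
      have := degree_eq_of_toricDegree_eq m hux'
      rw [zero_add] at this
      omega
    obtain ⟨t, ht⟩ := Finsupp.support_nonempty_iff.mpr hw
    exact (ih (Finsupp.mem_support_add_left ht a)).tail
      ⟨w + b, (hux'.trans hxy).symm, Finsupp.mem_support_add_left ht b, hj⟩

variable [IsLeftCancelAdd M]

theorem reflTransGen_toricMove_of_reflTransGen_toricLinked
    (h : ∀ g : M × ℤ, (r : ℤ) < g.2 → ∀ i j, ToricLinked m g i i → ToricLinked m g j j →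
      Relation.ReflTransGen (ToricLinked m g) i j)
    (u v : ι →₀ ℕ) (huv : toricDegree m u = toricDegree m v) :
    Relation.ReflTransGen (ToricMove m r) u v := by
  induction hn : u.degree using Nat.strong_induction_on generalizing u v with
  | _ n ih =>
  by_cases hnr : n ≤ r
  · exact .single ⟨0, u, v, (zero_add u).symm, (zero_add v).symm, huv, hn ▸ hnr⟩
  have hshare : ∀ x y b, toricDegree m x = toricDegree m u → toricDegree m y = toricDegree m u →
      b ∈ x.support → b ∈ y.support → Relation.ReflTransGen (ToricMove m r) x y := by
    intro x y b hx hy hbx hby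
    obtain ⟨x', rfl⟩ := Finsupp.exists_eq_single_add_of_mem_support hbx
    obtain ⟨y', rfl⟩ := Finsupp.exists_eq_single_add_of_mem_support hby
    have hx'y' : toricDegree m x' = toricDegree m y' :=
      add_left_cancel (by rw [← map_add, ← map_add, hx, hy])
    have hdeg := degree_eq_of_toricDegree_eq m hx
    rw [map_add, Finsupp.degree_single, hn] at hdeg
    exact reflTransGen_toricMove_add_left (ih _ (by omega) x' y' hx'y' rfl) _
  have hnonempty {x : ι →₀ ℕ} (hx : toricDegree m x = toricDegree m u) : x.support.Nonempty := by
    refine Finsupp.support_nonempty_iff.mpr fun hx0 => hnr ?_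
    rw [← hn, ← degree_eq_of_toricDegree_eq m hx, hx0, map_zero]
    exact Nat.zero_le r
  obtain ⟨i, hi⟩ := hnonempty rfl
  obtain ⟨j, hj⟩ := hnonempty huv.symm
  have hr : (r : ℤ) < (toricDegree m u).2 := by
    rw [toricDegree_snd, hn]
    exact_mod_cast not_le.mp hnr
  have hwalk : ∀ c, Relation.ReflTransGen (ToricLinked m (toricDegree m u)) i c →
      ∃ x, toricDegree m x = toricDegree m u ∧ c ∈ x.support ∧
        Relation.ReflTransGen (ToricMove m r) u x := by
    intro c hc
    induction hc with
    | refl => exact ⟨u, rfl, hi, .refl⟩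
    | @tail b c _ hbc ih' =>
      obtain ⟨x, hx, hbx, hux⟩ := ih'
      obtain ⟨y, hy, hby, hcy⟩ := hbc
      exact ⟨y, hy, hcy, hux.trans (hshare x y b hx hy hbx hby)⟩
  obtain ⟨x, hx, hjx, hux⟩ := hwalk j (h _ hr i j ⟨u, rfl, hi, hi⟩ ⟨v, huv.symm, hj, hj⟩)
  exact hux.trans (hshare x v j hx huv.symm hjx hj)

theorem generatedInDegreeLE_toricIdeal_iff_reflTransGen_toricLinked :
    GeneratedInDegreeLE (toricIdeal m) r ↔
      ∀ g : M × ℤ, (r : ℤ) < g.2 → ∀ i j, ToricLinked m g i i → ToricLinked m g j j →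
        Relation.ReflTransGen (ToricLinked m g) i j := by
  refine generatedInDegreeLE_toricIdeal_iff.trans
    ⟨fun h g hr i j ⟨u, hu, hi, _⟩ ⟨v, hv, hj, _⟩ => ?_,
      reflTransGen_toricMove_of_reflTransGen_toricLinked⟩
  have hdeg : r < u.degree := by
    rw [← hu, toricDegree_snd] at hr
    exact_mod_cast hr
  exact hu ▸
    reflTransGen_toricLinked_of_reflTransGen_toricMove (h u v (hu.trans hv.symm)) hdeg hi hj

end Linked

section Polytope

variable {ι σ : Type} {m : ι → σ → ℤ} {P : Set (σ → ℝ)}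

structure IsNormalPolytope (P : Set (σ → ℝ)) (m : ι → σ → ℤ) : Prop where
  convex : Convex ℝ P
  mem_iff : ∀ p : σ → ℤ, (fun i => (p i : ℝ)) ∈ P ↔ p ∈ Set.range m
  normal : ∀ l : ℕ, 1 ≤ l → ∀ s : σ → ℤ, (fun i => (s i : ℝ)) ∈ (l : ℝ) • P →
    ∃ y : Fin l → σ → ℤ, (∀ j, (fun i => (y j i : ℝ)) ∈ P) ∧ s = ∑ j, y j

theorem eq_zero_of_cast_mem_zero_smul {z : σ → ℤ} (hz : (fun x => (z x : ℝ)) ∈ (0 : ℝ) • P) :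
    z = 0 :=
  funext fun x => Int.cast_eq_zero.mp (congrFun (Set.zero_smul_set_subset P hz) x)

namespace IsNormalPolytope

theorem mem (hP : IsNormalPolytope P m) (i : ι) : (fun x => (m i x : ℝ)) ∈ P :=
  (hP.mem_iff (m i)).mpr ⟨i, rfl⟩

theorem cast_toricDegree_mem_smul (hP : IsNormalPolytope P m) (hne : P.Nonempty)
    (u : ι →₀ ℕ) : (fun x => ((toricDegree m u).1 x : ℝ)) ∈ (u.degree : ℝ) • P := by
  induction u using Finsupp.induction_linear with
  | zero =>
    rw [map_zero, map_zero, Nat.cast_zero, Set.zero_smul_set hne]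
    exact funext fun x => Int.cast_zero
  | add u v hu hv =>
    rw [map_add, map_add, Nat.cast_add, hP.convex.add_smul (Nat.cast_nonneg _) (Nat.cast_nonneg _)]
    convert Set.add_mem_add hu hv using 1
    exact funext fun x => by simp
  | single i n =>
    rw [toricDegree_single, Finsupp.degree_single]
    convert Set.smul_mem_smul_set (a := (n : ℝ)) (hP.mem i) using 1
    exact funext fun x => by simp

theorem exists_toricDegree_eq_of_mem_smul (hP : IsNormalPolytope P m) {n : ℕ} {z : σ → ℤ}
    (hz : (fun x => (z x : ℝ)) ∈ (n : ℝ) • P) : ∃ u, toricDegree m u = (z, (n : ℤ)) := by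
  rcases Nat.eq_zero_or_pos n with rfl | hn
  · rw [Nat.cast_zero] at hz
    exact ⟨0, by rw [map_zero, eq_zero_of_cast_mem_zero_smul hz]; rfl⟩
  obtain ⟨y, hy, rfl⟩ := hP.normal n hn z hz
  choose t ht using fun j => (hP.mem_iff (y j)).mp (hy j)
  refine ⟨∑ j, Finsupp.single (t j) 1, ?_⟩
  simp [toricDegree_single, ht, Prod.ext_iff, Prod.fst_sum, Prod.snd_sum]

theorem mem_smul_iff_exists_toricDegree (hP : IsNormalPolytope P m) (hne : P.Nonempty)
    (n : ℕ) (z : σ → ℤ) :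
    (fun x => (z x : ℝ)) ∈ (n : ℝ) • P ↔ ∃ u, toricDegree m u = (z, (n : ℤ)) := by
  refine ⟨hP.exists_toricDegree_eq_of_mem_smul, fun ⟨u, hu⟩ => ?_⟩
  have hdeg : u.degree = n := by simpa [hu] using (toricDegree_snd m u).symm
  simpa [hu, hdeg] using hP.cast_toricDegree_mem_smul hne u

theorem toricLinked_self_iff (hP : IsNormalPolytope P m) {n : ℕ} (hn : 1 ≤ n) (s : σ → ℤ)
    (i : ι) :
    ToricLinked m (s, (n : ℤ)) i i ↔ (fun x => ((s x - m i x : ℤ) : ℝ)) ∈ ((n : ℝ) - 1) • P := by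
  have hcast : (n : ℝ) - 1 = ((n - 1 : ℕ) : ℝ) := by rw [Nat.cast_sub hn, Nat.cast_one]
  rw [hcast]
  refine Iff.trans ?_ (hP.mem_smul_iff_exists_toricDegree ⟨_, hP.mem i⟩ (n - 1) (s - m i)).symm
  constructor
  · rintro ⟨u, hu, hi, -⟩
    obtain ⟨u', rfl⟩ := Finsupp.exists_eq_single_add_of_mem_support hi
    rw [toricDegree_single_one_add] at hu
    refine ⟨u', Prod.ext (eq_sub_of_add_eq' (congrArg Prod.fst hu)) ?_⟩
    have hsnd := congrArg Prod.snd hu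
    dsimp only [Prod.snd_add] at hsnd ⊢
    omega
  · rintro ⟨u', hu'⟩
    refine ⟨Finsupp.single i 1 + u', ?_, Finsupp.mem_support_single_one_add i u',
      Finsupp.mem_support_single_one_add i u'⟩
    rw [toricDegree_single_one_add, hu']
    refine Prod.ext (add_sub_cancel _ _) ?_
    show 1 + ((n - 1 : ℕ) : ℤ) = n
    omega

theorem cast_sub_sub_mem_smul_of_toricLinked (hP : IsNormalPolytope P m) {n : ℕ} {s : σ → ℤ}
    {i j : ι} (hij : i ≠ j) (h : ToricLinked m (s, (n : ℤ)) i j) :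
    (fun x => ((s x - m i x - m j x : ℤ) : ℝ)) ∈ ((n : ℝ) - 2) • P := by
  obtain ⟨u, hu, hi, hj⟩ := h
  obtain ⟨u', rfl⟩ := Finsupp.exists_eq_single_add_of_mem_support hi
  obtain ⟨u'', rfl⟩ := Finsupp.exists_eq_single_add_of_mem_support (by
    simpa [Finsupp.single_apply, hij] using hj : j ∈ u'.support)
  rw [toricDegree_single_one_add, toricDegree_single_one_add] at hu
  have hsnd := congrArg Prod.snd hu
  simp only [Prod.snd_add, toricDegree_snd] at hsnd
  rw [show (n : ℝ) - 2 = ((n - 2 : ℕ) : ℝ) by rw [Nat.cast_sub (by omega), Nat.cast_ofNat],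
    hP.mem_smul_iff_exists_toricDegree ⟨_, hP.mem i⟩]
  refine ⟨u'', Prod.ext (funext fun x => ?_) ?_⟩
  · have hx := congrFun (congrArg Prod.fst hu) x
    simp only [Prod.fst_add, Pi.add_apply] at hx
    show _ = s x - m i x - m j x
    omega
  · show _ = ((n - 2 : ℕ) : ℤ)
    rw [toricDegree_snd]
    omega

theorem toricLinked_of_cast_sub_sub_mem_smul (hP : IsNormalPolytope P m) {n : ℕ} (hn : 2 ≤ n)
    {s : σ → ℤ} {i j : ι} (h : (fun x => ((s x - m i x - m j x : ℤ) : ℝ)) ∈ ((n : ℝ) - 2) • P) :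
    ToricLinked m (s, (n : ℤ)) i j := by
  rw [show (n : ℝ) - 2 = ((n - 2 : ℕ) : ℝ) by rw [Nat.cast_sub hn, Nat.cast_ofNat]] at h
  obtain ⟨w, hw⟩ := hP.exists_toricDegree_eq_of_mem_smul h
  refine ⟨Finsupp.single i 1 + (Finsupp.single j 1 + w), ?_,
    Finsupp.mem_support_single_one_add i _,
    Finsupp.mem_support_add_right (Finsupp.mem_support_single_one_add j w) _⟩
  rw [toricDegree_single_one_add, toricDegree_single_one_add, hw]
  refine Prod.ext (funext fun x => ?_) ?_
  · show m i x + (m j x + (s x - m i x - m j x)) = s x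
    abel
  · show 1 + (1 + ((n - 2 : ℕ) : ℤ)) = n
    omega

theorem toricLinked_iff (hP : IsNormalPolytope P m) (hinj : Function.Injective m) {n : ℕ}
    (hn : 1 ≤ n) (s : σ → ℤ) (i j : ι) :
    ToricLinked m (s, (n : ℤ)) i j ↔
      (fun x => ((s x - m i x : ℤ) : ℝ)) ∈ ((n : ℝ) - 1) • P ∧
      (fun x => ((s x - m j x : ℤ) : ℝ)) ∈ ((n : ℝ) - 1) • P ∧
      (m i = m j ∨ (fun x => ((s x - m i x - m j x : ℤ) : ℝ)) ∈ ((n : ℝ) - 2) • P) := by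
  rcases eq_or_ne i j with rfl | hij
  · rw [← hP.toricLinked_self_iff hn]
    exact ⟨fun h => ⟨h, h, Or.inl rfl⟩, fun h => h.1⟩
  simp only [hinj.ne hij, false_or, ← hP.toricLinked_self_iff hn]
  refine ⟨fun ⟨u, hu, hi, hj⟩ => ⟨⟨u, hu, hi, hi⟩, ⟨u, hu, hj, hj⟩,
    hP.cast_sub_sub_mem_smul_of_toricLinked hij ⟨u, hu, hi, hj⟩⟩, fun ⟨hi, hj, hmem⟩ => ?_⟩
  -- in degree `n = 1` the first two conditions force `m i = s = m j`
  have hn2 : 2 ≤ n := by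
    by_contra! hlt
    obtain rfl : n = 1 := by omega
    rw [hP.toricLinked_self_iff le_rfl, Nat.cast_one, sub_self] at hi hj
    have hsi := sub_eq_zero.mp (eq_zero_of_cast_mem_zero_smul (z := s - m i) hi)
    have hsj := sub_eq_zero.mp (eq_zero_of_cast_mem_zero_smul (z := s - m j) hj)
    exact hinj.ne hij (hsi.symm.trans hsj)
  exact hP.toricLinked_of_cast_sub_sub_mem_smul hn2 hmem

end IsNormalPolytope

end Polytope

/-- the toric ideal of a normal lattice polytope is generated in degree
at most `r` iff for every `s ∈ S(∇)_{r'}` with `r' > r` the relation `∼ₛ` on the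
lattice points dividing `s` has exactly one equivalence class. -/
theorem generated_in_degree_iff_one_equivalence_class
    (d k : ℕ) (m : Fin k → Fin d → ℤ) (P : Set (Fin d → ℝ))
    (hlat : P = convexHull ℝ (Set.range fun j => fun i => ((m j i : ℤ) : ℝ)))
    (hinj : Function.Injective m)
    (henum : ∀ p : Fin d → ℤ, (fun i => (p i : ℝ)) ∈ P ↔ p ∈ Set.range m)
    (hnorm : ∀ l : ℕ, 1 ≤ l → ∀ s : Fin d → ℤ,
      (fun i => (s i : ℝ)) ∈ (l : ℝ) • P →
      ∃ y : Fin l → Fin d → ℤ, (∀ j, (fun i => (y j i : ℝ)) ∈ P) ∧ s = ∑ j, y j)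
    (r : ℕ) :
    GeneratedInDegreeLE (toricIdeal m) r ↔
      ∀ r' : ℕ, r < r' → ∀ s : Fin d → ℤ, (fun i => (s i : ℝ)) ∈ (r' : ℝ) • P →
        ∀ i j : Fin k,
          -- `m i` and `m j` divide `s` in `S(∇)`:
          (fun x => ((s x - m i x : ℤ) : ℝ)) ∈ ((r' : ℝ) - 1) • P →
          (fun x => ((s x - m j x : ℤ) : ℝ)) ∈ ((r' : ℝ) - 1) • P →
          -- `m i ∼ₛ m j`:
          Relation.ReflTransGen (fun i₁ i₂ : Fin k =>
            (fun x => ((s x - m i₁ x : ℤ) : ℝ)) ∈ ((r' : ℝ) - 1) • P ∧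
            (fun x => ((s x - m i₂ x : ℤ) : ℝ)) ∈ ((r' : ℝ) - 1) • P ∧
            (m i₁ = m i₂ ∨
              (fun x => ((s x - m i₁ x - m i₂ x : ℤ) : ℝ)) ∈ ((r' : ℝ) - 2) • P)) i j := by
  have hP : IsNormalPolytope P m := ⟨hlat ▸ convex_convexHull ℝ _, henum, hnorm⟩
  rw [generatedInDegreeLE_toricIdeal_iff_reflTransGen_toricLinked]
  constructor
  · intro h n hn s _ i j hi hj
    have hn1 : 1 ≤ n := by omega
    refine Relation.ReflTransGen.mono (fun a b hab => (hP.toricLinked_iff hinj hn1 s a b).mp hab)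
      _ _ (h (s, n) (Int.ofNat_lt.mpr hn) i j ?_ ?_)
    · exact (hP.toricLinked_self_iff hn1 s i).mpr hi
    · exact (hP.toricLinked_self_iff hn1 s j).mpr hj
  · rintro h ⟨s, n⟩ hn i j hi hj
    lift n to ℕ using (by omega)
    have hn1 : 1 ≤ n := by omega
    have hs : (fun x => (s x : ℝ)) ∈ (n : ℝ) • P := by
      obtain ⟨u, hu, -⟩ := hi
      exact (hP.mem_smul_iff_exists_toricDegree ⟨_, hP.mem i⟩ n s).mpr ⟨u, hu⟩
    refine Relation.ReflTransGen.mono (fun a b hab => (hP.toricLinked_iff hinj hn1 s a b).mpr hab)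
      _ _ (h n (Int.ofNat_lt.mp hn) s hs i j ?_ ?_)
    · exact (hP.toricLinked_self_iff hn1 s i).mp hi
    · exact (hP.toricLinked_self_iff hn1 s j).mp hj
end

section
/- Let ∇ be a lattice polytope. Two vertices v₁, v₂ of ∇ are neighbouring (they lie on a common edge with no intermediate lattice point) if and only if there is no lattice point m ∈ ∇ ∩ ℤ^d other than v₁ and v₂ with supp(m) ⊆ supp(v₁) ∪ supp(v₂). -/
/-! The facets outside `S = supp v₁ ∪ supp v₂` cut out a face `G` of `∇`: the points of `∇` whose
support lies in `S`. It contains the segment `[v₁, v₂]`, and the midpoint of that segment has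
support exactly `S`. If `[v₁, v₂]` is a face, any `p ∈ ∇` with `supp p ⊆ S` lies on it, because
`∇` extends beyond the midpoint in the direction away from `p`. Conversely, if no other lattice
point has support in `S`, the vertices of `G`, being lattice points, are among `v₁, v₂`, so by
Krein–Milman `G` is the segment, which is therefore a face. -/

open Set Filter Topology

section Polyhedron

variable {ι E : Type*} [AddCommGroup E] [Module ℝ E] (ℓ : ι → E →ₗ[ℝ] ℝ) (c : ι → ℝ)

def polyhedron : Set E := {x | ∀ i, c i ≤ ℓ i x}

def facetSupport (x : E) : Set ι := {i | c i < ℓ i x}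

def supportFace (S : Set ι) : Set E := {x ∈ polyhedron ℓ c | facetSupport ℓ c x ⊆ S}

variable {ℓ c}

theorem supportFace_eq (S : Set ι) :
    supportFace ℓ c S = polyhedron ℓ c ∩ ⋂ i ∈ Sᶜ, {x | ℓ i x ≤ c i} := by
  ext x
  simp only [supportFace, facetSupport, subset_def, mem_ofPred_eq, mem_inter_iff, mem_iInter,
    mem_compl_iff]
  exact and_congr_right fun _ => forall_congr' fun i => by rw [not_imp_comm, not_le]

theorem convex_supportFace (S : Set ι) : Convex ℝ (supportFace ℓ c S) := by
  rw [supportFace_eq, polyhedron, ofPred_forall]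
  exact (convex_iInter fun i => convex_halfSpace_ge (ℓ i).isLinear _).inter
    (convex_iInter₂ fun i _ => convex_halfSpace_le (ℓ i).isLinear _)

theorem facetSupport_of_mem_openSegment {x y z : E} (hx : x ∈ polyhedron ℓ c)
    (hy : y ∈ polyhedron ℓ c) (hz : z ∈ openSegment ℝ x y) :
    facetSupport ℓ c z = facetSupport ℓ c x ∪ facetSupport ℓ c y := by
  obtain ⟨a, b, ha, hb, hab, rfl⟩ := hz
  ext i
  have hxi := hx i
  have hyi := hy i
  have hsplit : a * ℓ i x + b * ℓ i y - c i = a * (ℓ i x - c i) + b * (ℓ i y - c i) := by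
    linear_combination c i * hab
  simp only [facetSupport, mem_ofPred_eq, mem_union, map_add, map_smul, smul_eq_mul]
  constructor
  · intro h
    by_contra! h'
    nlinarith
  · rintro (h | h) <;> nlinarith

theorem isExtreme_supportFace (S : Set ι) :
    IsExtreme ℝ (polyhedron ℓ c) (supportFace ℓ c S) := by
  refine ⟨sep_subset _ _, fun x hx y hy z hz hzxy => ⟨hx, ?_⟩⟩
  have hzS : facetSupport ℓ c z ⊆ S := hz.2
  rw [facetSupport_of_mem_openSegment hx hy hzxy] at hzS
  exact subset_union_left.trans hzS

/-- Moving from `x` away from `p` keeps every facet not in `facetSupport x` tight, because it is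
already tight at `p`, and the finitely many others stay slack for a short while. -/
theorem exists_mem_openSegment_of_facetSupport_subset [Finite ι] {x p : E}
    (hx : x ∈ polyhedron ℓ c) (hp : p ∈ polyhedron ℓ c)
    (h : facetSupport ℓ c p ⊆ facetSupport ℓ c x) :
    ∃ y ∈ polyhedron ℓ c, x ∈ openSegment ℝ p y := by
  have hline : ∀ i (ε : ℝ), ℓ i (x + ε • (x - p)) = ℓ i x + ε * (ℓ i x - ℓ i p) := by
    intro i ε
    simp only [map_add, map_smul, map_sub, smul_eq_mul]
  have hsmall : ∀ᶠ ε in 𝓝[>] (0 : ℝ), x + ε • (x - p) ∈ polyhedron ℓ c := by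
    simp only [polyhedron, mem_ofPred_eq, eventually_all, hline]
    intro i
    by_cases hi : i ∈ facetSupport ℓ c x
    · have hcont : Tendsto (fun ε : ℝ => ℓ i x + ε * (ℓ i x - ℓ i p)) (𝓝 0) (𝓝 (ℓ i x)) := by
        simpa using ((continuous_id.mul continuous_const).const_add (ℓ i x)).tendsto (0 : ℝ)
      exact nhdsWithin_le_nhds ((hcont.eventually (lt_mem_nhds hi)).mono fun _ => le_of_lt)
    · have hpi : ℓ i p = c i := le_antisymm (not_lt.1 fun h' => hi (h h')) (hp i)
      have hxi : ℓ i x = c i := le_antisymm (not_lt.1 hi) (hx i)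
      exact Eventually.of_forall fun ε => by rw [hxi, hpi]; simp
  obtain ⟨ε, hεP, hε : 0 < ε⟩ := (hsmall.and self_mem_nhdsWithin).exists
  refine ⟨_, hεP, ε / (1 + ε), 1 / (1 + ε), by positivity, by positivity, by field_simp; ring, ?_⟩
  match_scalars <;> field_simp; ring

theorem IsExtreme.mem_of_facetSupport_subset [Finite ι] {A : Set E}
    (hA : IsExtreme ℝ (polyhedron ℓ c) A) {x p : E} (hx : x ∈ A) (hp : p ∈ polyhedron ℓ c)
    (h : facetSupport ℓ c p ⊆ facetSupport ℓ c x) : p ∈ A := by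
  obtain ⟨y, hy, hxy⟩ := exists_mem_openSegment_of_facetSupport_subset (hA.1 hx) hp h
  exact hA.left_mem_of_mem_openSegment hp hy hx hxy

variable [TopologicalSpace E]

theorem isClosed_supportFace (hℓ : ∀ i, Continuous (ℓ i)) (S : Set ι) :
    IsClosed (supportFace ℓ c S) := by
  rw [supportFace_eq, polyhedron, ofPred_forall]
  exact (isClosed_iInter fun i => isClosed_le continuous_const (hℓ i)).inter
    (isClosed_biInter fun i _ => isClosed_le (hℓ i) continuous_const)

end Polyhedron

theorem subset_segment_of_extremePoints_subset {E : Type*} [AddCommGroup E] [Module ℝ E]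
    [TopologicalSpace E] [T2Space E] [IsTopologicalAddGroup E] [ContinuousSMul ℝ E]
    [LocallyConvexSpace ℝ E] {K : Set E} (hK : IsCompact K) (hKc : Convex ℝ K) {a b : E}
    (h : K.extremePoints ℝ ⊆ {a, b}) : K ⊆ segment ℝ a b := by
  rw [← closure_convexHull_extremePoints hK hKc, ← convexHull_pair]
  exact closure_minimal (convexHull_mono h) ((toFinite _).isClosed_convexHull ℝ)

section LatticePolytope

variable {ι E Λ : Type*} [AddCommGroup E] [Module ℝ E] [TopologicalSpace E]
  [T2Space E] [IsTopologicalAddGroup E] [ContinuousSMul ℝ E] [LocallyConvexSpace ℝ E]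
  {ℓ : ι → E →ₗ[ℝ] ℝ} {c : ι → ℝ} {e : Λ → E}

theorem supportFace_eq_segment (hℓ : ∀ i, Continuous (ℓ i)) (hP : IsCompact (polyhedron ℓ c))
    (hext : (polyhedron ℓ c).extremePoints ℝ ⊆ range e) {v₁ v₂ : Λ}
    (hv₁ : e v₁ ∈ polyhedron ℓ c) (hv₂ : e v₂ ∈ polyhedron ℓ c)
    (hno : ¬ ∃ p, e p ∈ polyhedron ℓ c ∧ p ≠ v₁ ∧ p ≠ v₂ ∧
      facetSupport ℓ c (e p) ⊆ facetSupport ℓ c (e v₁) ∪ facetSupport ℓ c (e v₂)) :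
    supportFace ℓ c (facetSupport ℓ c (e v₁) ∪ facetSupport ℓ c (e v₂)) =
      segment ℝ (e v₁) (e v₂) := by
  set G := supportFace ℓ c (facetSupport ℓ c (e v₁) ∪ facetSupport ℓ c (e v₂))
  have hGext : G.extremePoints ℝ ⊆ {e v₁, e v₂} := by
    intro y hy
    obtain ⟨q, rfl⟩ := hext ((isExtreme_supportFace _).extremePoints_subset_extremePoints hy)
    by_contra hq
    simp only [mem_insert_iff, mem_singleton_iff, not_or] at hq
    exact hno ⟨q, hy.1.1, fun h => hq.1 (congrArg e h), fun h => hq.2 (congrArg e h), hy.1.2⟩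
  refine (subset_segment_of_extremePoints_subset ?_ (convex_supportFace _) hGext).antisymm
    ((convex_supportFace _).segment_subset ⟨hv₁, subset_union_left⟩ ⟨hv₂, subset_union_right⟩)
  exact hP.of_isClosed_subset (isClosed_supportFace hℓ _) (sep_subset _ _)

theorem isExtreme_segment_and_not_exists_openSegment_iff [Finite ι] (hℓ : ∀ i, Continuous (ℓ i))
    (he : Function.Injective e) (hP : IsCompact (polyhedron ℓ c))
    (hext : (polyhedron ℓ c).extremePoints ℝ ⊆ range e) {v₁ v₂ : Λ}
    (hv₁ : e v₁ ∈ polyhedron ℓ c) (hv₂ : e v₂ ∈ polyhedron ℓ c) :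
    (IsExtreme ℝ (polyhedron ℓ c) (segment ℝ (e v₁) (e v₂)) ∧
      ¬ ∃ p, e p ∈ openSegment ℝ (e v₁) (e v₂) ∧ p ≠ v₁ ∧ p ≠ v₂) ↔
    ¬ ∃ p, e p ∈ polyhedron ℓ c ∧ p ≠ v₁ ∧ p ≠ v₂ ∧
      facetSupport ℓ c (e p) ⊆ facetSupport ℓ c (e v₁) ∪ facetSupport ℓ c (e v₂) := by
  constructor
  · rintro ⟨hseg, hnone⟩ ⟨p, hp, hp₁, hp₂, hsupp⟩
    have hmid := midpoint_mem_openSegment (𝕜 := ℝ) (e v₁) (e v₂)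
    rw [← facetSupport_of_mem_openSegment hv₁ hv₂ hmid] at hsupp
    have hpseg := hseg.mem_of_facetSupport_subset (openSegment_subset_segment _ _ _ hmid) hp hsupp
    exact hnone ⟨p, mem_openSegment_of_ne_left_right (he.ne hp₁).symm (he.ne hp₂).symm hpseg,
      hp₁, hp₂⟩
  · intro hno
    have hface := supportFace_eq_segment hℓ hP hext hv₁ hv₂ hno
    refine ⟨hface ▸ isExtreme_supportFace _, fun ⟨p, hp, hp₁, hp₂⟩ => hno ?_⟩
    have hpG := hface ▸ openSegment_subset_segment _ _ _ hp
    exact ⟨p, hpG.1, hp₁, hp₂, hpG.2⟩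

end LatticePolytope

theorem neighbouring_iff_no_lattice_point_in_support_union_general
    (d : ℕ) (F : Type) [Fintype F]
    (a : F → Fin d → ℤ) (c : F → ℤ)
    (P : Set (Fin d → ℝ)) (V : Finset (Fin d → ℤ))
    (hlat : P = convexHull ℝ ((fun m : Fin d → ℤ => fun i => (m i : ℝ)) ''
      (V : Set (Fin d → ℤ))))
    (hfacet : P = {x : Fin d → ℝ | ∀ f : F, (c f : ℝ) ≤ ∑ i, x i * (a f i : ℝ)})
    (v₁ v₂ : Fin d → ℤ)
    (hv₁ : (fun i => (v₁ i : ℝ)) ∈ Set.extremePoints ℝ P)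
    (hv₂ : (fun i => (v₂ i : ℝ)) ∈ Set.extremePoints ℝ P) :
    -- `v₁` and `v₂` are neighbouring:
    (IsExtreme ℝ P (segment ℝ (fun i => (v₁ i : ℝ)) (fun i => (v₂ i : ℝ))) ∧
      ¬ ∃ p : Fin d → ℤ,
        (fun i => (p i : ℝ)) ∈ openSegment ℝ (fun i => (v₁ i : ℝ)) (fun i => (v₂ i : ℝ)) ∧
        p ≠ v₁ ∧ p ≠ v₂)
    ↔
    ¬ ∃ p : Fin d → ℤ, (fun i => (p i : ℝ)) ∈ P ∧ p ≠ v₁ ∧ p ≠ v₂ ∧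
      {f : F | (c f : ℝ) < ∑ i, (p i : ℝ) * (a f i : ℝ)}
        ⊆ {f : F | (c f : ℝ) < ∑ i, (v₁ i : ℝ) * (a f i : ℝ)}
          ∪ {f : F | (c f : ℝ) < ∑ i, (v₂ i : ℝ) * (a f i : ℝ)} := by
  let ℓ : F → (Fin d → ℝ) →ₗ[ℝ] ℝ := fun f => (dotProductBilin ℝ ℝ).flip fun i => (a f i : ℝ)
  have hP : P = polyhedron ℓ fun f => (c f : ℝ) := hfacet
  subst hP
  exact isExtreme_segment_and_not_exists_openSegment_iff
    (fun f => LinearMap.continuous_of_finiteDimensional (ℓ f)) Int.cast_injective.comp_left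
    (hlat ▸ (V.finite_toSet.image _).isCompact_convexHull ℝ)
    (hlat ▸ extremePoints_convexHull_subset.trans (image_subset_range _ _)) hv₁.1 hv₂.1

/-- two vertices of a lattice polytope are neighbouring (they span an
edge with no intermediate lattice point) iff no other lattice point has support
contained in the union of their supports. -/
theorem neighbouring_iff_no_lattice_point_in_support_union
    (d : ℕ) (F : Type) [Fintype F]
    (a : F → Fin d → ℤ) (c : F → ℤ)
    (P : Set (Fin d → ℝ)) (V : Finset (Fin d → ℤ))
    (hlat : P = convexHull ℝ ((fun m : Fin d → ℤ => fun i => (m i : ℝ)) ''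
      (V : Set (Fin d → ℤ))))
    (hfacet : P = {x : Fin d → ℝ | ∀ f : F, (c f : ℝ) ≤ ∑ i, x i * (a f i : ℝ)})
    (hprim : ∀ f : F, Finset.univ.gcd (a f) = 1)
    (v₁ v₂ : Fin d → ℤ) (hne : v₁ ≠ v₂)
    (hv₁ : (fun i => (v₁ i : ℝ)) ∈ Set.extremePoints ℝ P)
    (hv₂ : (fun i => (v₂ i : ℝ)) ∈ Set.extremePoints ℝ P) :
    -- `v₁` and `v₂` are neighbouring:
    (IsExtreme ℝ P (segment ℝ (fun i => (v₁ i : ℝ)) (fun i => (v₂ i : ℝ))) ∧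
      ¬ ∃ p : Fin d → ℤ,
        (fun i => (p i : ℝ)) ∈ openSegment ℝ (fun i => (v₁ i : ℝ)) (fun i => (v₂ i : ℝ)) ∧
        p ≠ v₁ ∧ p ≠ v₂)
    ↔
    ¬ ∃ p : Fin d → ℤ, (fun i => (p i : ℝ)) ∈ P ∧ p ≠ v₁ ∧ p ≠ v₂ ∧
      {f : F | (c f : ℝ) < ∑ i, (p i : ℝ) * (a f i : ℝ)}
        ⊆ {f : F | (c f : ℝ) < ∑ i, (v₁ i : ℝ) * (a f i : ℝ)}
          ∪ {f : F | (c f : ℝ) < ∑ i, (v₂ i : ℝ) * (a f i : ℝ)} :=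
  neighbouring_iff_no_lattice_point_in_support_union_general d F a c P V hlat hfacet v₁ v₂ hv₁ hv₂
end

section
/- Let ∇ be a compressed lattice polytope, s ∈ S(∇)_k with k ≥ 1, and v₁, v₂ two vertices of ∇ with (v₁,1) and (v₂,1) each dividing s in the monoid S(∇). Then there is a sequence of vertices w₁ = v₁, w₂, …, w_j = v₂ of ∇ such that each (w_i,1) divides s and consecutive w_i, w_{i+1} are neighbouring vertices of ∇. -/
open BigOperators Pointwise

/-- Two lattice points of a polytope `P` are neighbouring vertices: the segment
between them is a face (an edge) of `P` with no intermediate lattice point. -/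
def Neighbouring {d : ℕ} (P : Set (Fin d → ℝ)) (v w : Fin d → ℤ) : Prop :=
  v ≠ w ∧
  (fun i => (v i : ℝ)) ∈ Set.extremePoints ℝ P ∧
  (fun i => (w i : ℝ)) ∈ Set.extremePoints ℝ P ∧
  IsExtreme ℝ P (segment ℝ (fun i => (v i : ℝ)) (fun i => (w i : ℝ))) ∧
  ¬ ∃ p : Fin d → ℤ,
    (fun i => (p i : ℝ)) ∈ openSegment ℝ (fun i => (v i : ℝ)) (fun i => (w i : ℝ)) ∧
    p ≠ v ∧ p ≠ w

/-!
On a compressed polytope every facet functional takes only the two consecutive values `c f`,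
`c f + 1` at lattice points, and a vertex is determined by its vector of facet values. Whether
`s - u ∈ (k - 1) ∇` is a condition on each facet value of `u` separately, so a vertex whose facet
values agree, facet by facet, with those of `p` or of `q` divides `s` whenever `p` and `q` do.

For two such vertices `p ≠ q`, impose the facet equations common to `p` and `q`. The resulting
face of `∇` is either the segment `[p, q]`, an edge without interior lattice points because some
facet functional takes consecutive integer values at its ends, or it has a third vertex `u`, whose
facet values lie between those of `p` and `q` in the Hamming sense. Induction on the Hamming
distance of the facet-value vectors then produces the chain.
-/

open Function Set

theorem hammingDist_add_hammingDist_of_forall_eq_or_eq {ι β : Type*} [Fintype ι] [DecidableEq β]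
    {x y z : ι → β} (h : ∀ i, z i = x i ∨ z i = y i) :
    hammingDist x z + hammingDist z y = hammingDist x y := by
  classical
  unfold hammingDist
  rw [← Finset.card_union_of_disjoint]
  · congr 1
    ext i
    simp only [Finset.mem_union, Finset.mem_filter, Finset.mem_univ, true_and]
    rcases h i with h | h <;> rw [h] <;> tauto
  · rw [Finset.disjoint_filter]
    intro i _ hxz hzy
    rcases h i with h | h <;> simp_all

theorem Relation.reflTransGen_of_forall_exists_between {α ι β : Type*} [Fintype ι]
    [DecidableEq β] {φ : α → ι → β} (hφ : Injective φ) {r : α → α → Prop}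
    (h : ∀ p q, p ≠ q → r p q ∨ ∃ u, u ≠ p ∧ u ≠ q ∧ ∀ i, φ u i = φ p i ∨ φ u i = φ q i)
    (p q : α) : ReflTransGen r p q := by
  induction hn : hammingDist (φ p) (φ q) using Nat.strong_induction_on generalizing p q with
  | _ n ih =>
  by_cases hpq : p = q
  · exact hpq ▸ .refl
  rcases h p q hpq with hr | ⟨u, hup, huq, hu⟩
  · exact .single hr
  have hsum := hammingDist_add_hammingDist_of_forall_eq_or_eq hu
  have hpu := hammingDist_pos.2 (hφ.ne hup.symm)
  have huq := hammingDist_pos.2 (hφ.ne huq)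
  exact (ih _ (by omega) p u rfl).trans (ih _ (by omega) u q rfl)

theorem Relation.ReflTransGen.exists_fin_chain {α : Type*} {r : α → α → Prop} {a b : α}
    (h : ReflTransGen r a b) :
    ∃ (j : ℕ) (w : Fin (j + 1) → α), w 0 = a ∧ w (Fin.last j) = b ∧
      ∀ i : Fin j, r (w i.castSucc) (w i.succ) := by
  obtain ⟨l, hl, hlast⟩ := List.exists_isChain_cons_of_relationReflTransGen h
  refine ⟨l.length, fun i => (a :: l)[i], rfl, ?_, fun i => List.isChain_iff_getElem.mp hl i ?_⟩
  · simpa [List.getLast_eq_getElem] using hlast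
  · simp

theorem segment_eq_of_extremePoints_subset {E : Type*} [AddCommGroup E] [Module ℝ E]
    [TopologicalSpace E] [T2Space E] [IsTopologicalAddGroup E] [ContinuousSMul ℝ E]
    [LocallyConvexSpace ℝ E] {G : Set E} (hG : IsCompact G) (hGc : Convex ℝ G) {x y : E}
    (hx : x ∈ G) (hy : y ∈ G) (hext : G.extremePoints ℝ ⊆ {x, y}) : G = segment ℝ x y := by
  refine (hGc.segment_subset hx hy).antisymm' ?_
  rw [← closure_convexHull_extremePoints hG hGc, ← convexHull_pair (𝕜 := ℝ),
    ← ((toFinite {x, y}).isCompact_convexHull ℝ).isClosed.closure_eq]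
  exact closure_mono (convexHull_mono hext)

abbrev castVec {ι : Type*} (u : ι → ℤ) : ι → ℝ := fun i => (u i : ℝ)

theorem eq_of_castVec_sub_mem_zero_smul {ι : Type*} {P : Set (ι → ℝ)} (hP : P.Nonempty)
    {s v : ι → ℤ} (h : castVec (s - v) ∈ (0 : ℝ) • P) : v = s := by
  rw [zero_smul_set hP, mem_zero] at h
  funext i
  have := congrFun h i
  simp only [castVec, Pi.sub_apply, Pi.zero_apply, Int.cast_eq_zero] at this
  omega

section

variable {ι F : Type*} [Fintype ι]

theorem castVec_dotProduct (u v : ι → ℤ) : castVec u ⬝ᵥ castVec v = ((u ⬝ᵥ v : ℤ) : ℝ) := by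
  simp [dotProduct]

def levelSet (w : F → ι → ℝ) (S : Set F) (b : F → ℝ) : Set (ι → ℝ) :=
  {x | ∀ f ∈ S, x ⬝ᵥ w f = b f}

theorem convex_levelSet (w : F → ι → ℝ) (S : Set F) (b : F → ℝ) :
    Convex ℝ (levelSet w S b) := by
  intro x hx y hy α β _ _ hαβ f hf
  rw [add_dotProduct, smul_dotProduct, smul_dotProduct, hx f hf, hy f hf, smul_eq_mul,
    smul_eq_mul, ← add_mul, hαβ, one_mul]

theorem isClosed_levelSet (w : F → ι → ℝ) (S : Set F) (b : F → ℝ) :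
    IsClosed (levelSet w S b) := by
  simp only [levelSet, ofPred_forall]
  exact isClosed_iInter fun f => isClosed_iInter fun _ =>
    isClosed_eq (continuous_id.dotProduct continuous_const) continuous_const

theorem isExtreme_inter_levelSet {A : Set (ι → ℝ)} {w : F → ι → ℝ} {S : Set F} {b : F → ℝ}
    (hb : ∀ f ∈ S, (∀ x ∈ A, x ⬝ᵥ w f ≤ b f) ∨ (∀ x ∈ A, b f ≤ x ⬝ᵥ w f)) :
    IsExtreme ℝ A (A ∩ levelSet w S b) := by
  refine ⟨inter_subset_left, ?_⟩
  rintro x₁ hx₁ x₂ hx₂ _ ⟨-, hz⟩ ⟨α, β, hα, hβ, hαβ, rfl⟩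
  refine ⟨hx₁, fun f hf => ?_⟩
  have hcomb := hz f hf
  rw [add_dotProduct, smul_dotProduct, smul_dotProduct, smul_eq_mul, smul_eq_mul] at hcomb
  have hb' : α * b f + β * b f = b f := by linear_combination b f * hαβ
  rcases hb f hf with h | h <;>
    nlinarith [h x₁ hx₁, mul_le_mul_of_nonneg_left (h x₂ hx₂) hβ.le]

theorem eq_of_mem_extremePoints_of_forall_dotProduct_eq {P : Set (ι → ℝ)} {w : F → ι → ℝ}
    {c : F → ℝ} (hP : P = {x | ∀ f, c f ≤ x ⬝ᵥ w f}) {x y : ι → ℝ}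
    (hx : x ∈ P.extremePoints ℝ) (hxy : ∀ f, x ⬝ᵥ w f = y ⬝ᵥ w f) : y = x := by
  have hmem (z : ι → ℝ) (hz : ∀ f, z ⬝ᵥ w f = x ⬝ᵥ w f) : z ∈ P := by
    have hxP := hx.1
    rw [hP] at hxP ⊢
    exact fun f => (hz f).symm ▸ hxP f
  have hy : y ∈ P := hmem y fun f => (hxy f).symm
  have hy' : (2 : ℝ) • x - y ∈ P := hmem _ fun f => by
    rw [sub_dotProduct, smul_dotProduct, ← hxy f, smul_eq_mul]; ring
  refine (mem_extremePoints.1 hx).2 y hy _ hy' ⟨1 / 2, 1 / 2, by norm_num, by norm_num,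
    by norm_num, ?_⟩ |>.1
  ext i
  simp only [one_div, Pi.add_apply, Pi.smul_apply, smul_eq_mul, Pi.sub_apply]
  ring

theorem mem_smul_of_forall_dotProduct_eq_or_eq {P : Set (ι → ℝ)} {w : F → ι → ℝ}
    {c : F → ℝ} (hP : P = {x | ∀ f, c f ≤ x ⬝ᵥ w f}) {r : ℝ} (hr : r ≠ 0) {x y z : ι → ℝ}
    (hx : x ∈ r • P) (hy : y ∈ r • P) (hz : ∀ f, z ⬝ᵥ w f = x ⬝ᵥ w f ∨ z ⬝ᵥ w f = y ⬝ᵥ w f) :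
    z ∈ r • P := by
  rw [mem_smul_set_iff_inv_smul_mem₀ hr, hP] at hx hy ⊢
  intro f
  simp only [mem_ofPred_eq, smul_dotProduct, smul_eq_mul] at hx hy ⊢
  rcases hz f with h | h <;> rw [h]
  exacts [hx f, hy f]

theorem not_castVec_mem_openSegment {p q r w : ι → ℤ} (h : q ⬝ᵥ w = p ⬝ᵥ w + 1) :
    castVec r ∉ openSegment ℝ (castVec p) (castVec q) := by
  rintro ⟨α, β, hα, hβ, hαβ, hr⟩
  have hval : ((r ⬝ᵥ w : ℤ) : ℝ) = (p ⬝ᵥ w : ℤ) + β := by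
    rw [← castVec_dotProduct, ← hr, add_dotProduct, smul_dotProduct, smul_dotProduct,
      castVec_dotProduct, castVec_dotProduct, h]
    push_cast
    linear_combination ((p ⬝ᵥ w : ℤ) : ℝ) * hαβ
  have hlo : p ⬝ᵥ w < r ⬝ᵥ w := by
    exact_mod_cast (show ((p ⬝ᵥ w : ℤ) : ℝ) < (r ⬝ᵥ w : ℤ) by linarith)
  have hhi : r ⬝ᵥ w < p ⬝ᵥ w + 1 := by
    exact_mod_cast (show ((r ⬝ᵥ w : ℤ) : ℝ) < (p ⬝ᵥ w : ℤ) + 1 by linarith)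
  omega

theorem dotProduct_eq_or_eq_add_one {a : F → ι → ℤ} {c : F → ℤ} {P : Set (ι → ℝ)}
    (hP : P = {x | ∀ f, (c f : ℝ) ≤ x ⬝ᵥ castVec (a f)})
    (hwidth : ∀ f, ∀ x ∈ P, x ⬝ᵥ castVec (a f) ≤ c f + 1) {u : ι → ℤ}
    (hu : castVec u ∈ P) (f : F) : u ⬝ᵥ a f = c f ∨ u ⬝ᵥ a f = c f + 1 := by
  have hlo : (c f : ℝ) ≤ (u ⬝ᵥ a f : ℤ) := castVec_dotProduct u (a f) ▸ (hP ▸ hu) f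
  have hhi : ((u ⬝ᵥ a f : ℤ) : ℝ) ≤ (c f + 1 : ℤ) := by
    push_cast; exact castVec_dotProduct u (a f) ▸ hwidth f _ hu
  have hlo' : c f ≤ u ⬝ᵥ a f := by exact_mod_cast hlo
  have hhi' : u ⬝ᵥ a f ≤ c f + 1 := by exact_mod_cast hhi
  omega

theorem eq_of_castVec_mem_extremePoints_of_forall_dotProduct_eq {a : F → ι → ℤ} {c : F → ℤ}
    {P : Set (ι → ℝ)} (hP : P = {x | ∀ f, (c f : ℝ) ≤ x ⬝ᵥ castVec (a f)})
    {u v : ι → ℤ} (hu : castVec u ∈ P.extremePoints ℝ) (h : ∀ f, u ⬝ᵥ a f = v ⬝ᵥ a f) :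
    v = u := by
  have := eq_of_mem_extremePoints_of_forall_dotProduct_eq (y := castVec v) hP hu fun f => by
    simp only [castVec_dotProduct, h f]
  funext i
  exact_mod_cast congrFun this i

end

section

variable {F : Type*} {d : ℕ} {a : F → Fin d → ℤ} {c : F → ℤ} {P : Set (Fin d → ℝ)}

theorem neighbouring_of_isExtreme_segment (hP : P = {x | ∀ f, (c f : ℝ) ≤ x ⬝ᵥ castVec (a f)})
    (hwidth : ∀ f, ∀ x ∈ P, x ⬝ᵥ castVec (a f) ≤ c f + 1) {p q : Fin d → ℤ}
    (hp : castVec p ∈ P.extremePoints ℝ) (hq : castVec q ∈ P.extremePoints ℝ) (hpq : p ≠ q)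
    (hedge : IsExtreme ℝ P (segment ℝ (castVec p) (castVec q))) : Neighbouring P p q := by
  refine ⟨hpq, hp, hq, hedge, ?_⟩
  rintro ⟨r, hr, -, -⟩
  obtain ⟨f, hf⟩ : ∃ f, p ⬝ᵥ a f ≠ q ⬝ᵥ a f := by
    by_contra! h
    exact hpq <| eq_of_castVec_mem_extremePoints_of_forall_dotProduct_eq hP hq fun f =>
      (h f).symm
  rcases dotProduct_eq_or_eq_add_one hP hwidth hp.1 f with hpf | hpf <;>
    rcases dotProduct_eq_or_eq_add_one hP hwidth hq.1 f with hqf | hqf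
  · exact hf (hpf.trans hqf.symm)
  · exact not_castVec_mem_openSegment (w := a f) (by omega) hr
  · exact not_castVec_mem_openSegment (w := a f) (by omega)
      (openSegment_symm ℝ (castVec p) (castVec q) ▸ hr)
  · exact hf (hpf.trans hqf.symm)

theorem neighbouring_or_exists_vertex_between {V : Finset (Fin d → ℤ)}
    (hlat : P = convexHull ℝ (castVec '' V))
    (hP : P = {x | ∀ f, (c f : ℝ) ≤ x ⬝ᵥ castVec (a f)})
    (hwidth : ∀ f, ∀ x ∈ P, x ⬝ᵥ castVec (a f) ≤ c f + 1) {p q : Fin d → ℤ}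
    (hp : castVec p ∈ P.extremePoints ℝ) (hq : castVec q ∈ P.extremePoints ℝ) (hpq : p ≠ q) :
    Neighbouring P p q ∨ ∃ u, castVec u ∈ P.extremePoints ℝ ∧ u ≠ p ∧ u ≠ q ∧
      ∀ f, u ⬝ᵥ a f = p ⬝ᵥ a f ∨ u ⬝ᵥ a f = q ⬝ᵥ a f := by
  set G := P ∩ levelSet (fun f => castVec (a f)) {f | p ⬝ᵥ a f = q ⬝ᵥ a f}
    (fun f => ((p ⬝ᵥ a f : ℤ) : ℝ))
  have hvals {u : Fin d → ℤ} (hu : castVec u ∈ P) := dotProduct_eq_or_eq_add_one hP hwidth hu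
  have hGext : IsExtreme ℝ P G := isExtreme_inter_levelSet fun f _ => by
    rcases hvals hp.1 f with h | h <;> simp only [h]
    · exact .inr fun x hx => (hP ▸ hx) f
    · exact .inl fun x hx => by push_cast; exact hwidth f x hx
  have hPc : IsCompact P := hlat ▸ (V.finite_toSet.image _).isCompact_convexHull ℝ
  have hGc : IsCompact G := hPc.inter_right (isClosed_levelSet _ _ _)
  have hGconv : Convex ℝ G := (hlat ▸ convex_convexHull ℝ _).inter (convex_levelSet _ _ _)
  have hpG : castVec p ∈ G := ⟨hp.1, fun f _ => castVec_dotProduct _ _⟩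
  have hqG : castVec q ∈ G := ⟨hq.1, fun f hf => by rw [castVec_dotProduct, ← hf]⟩
  by_cases hsub : G.extremePoints ℝ ⊆ {castVec p, castVec q}
  · left
    rw [segment_eq_of_extremePoints_subset hGc hGconv hpG hqG hsub] at hGext
    exact neighbouring_of_isExtreme_segment hP hwidth hp hq hpq hGext
  right
  obtain ⟨x, hxG, hxpq⟩ := not_subset.1 hsub
  have hxP := hGext.extremePoints_subset_extremePoints hxG
  have hPV : P.extremePoints ℝ ⊆ castVec '' V := by rw [hlat]; exact extremePoints_convexHull_subset
  obtain ⟨u, -, rfl⟩ := hPV hxP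
  refine ⟨u, hxP, ?_, ?_, fun f => ?_⟩
  · rintro rfl; exact hxpq (.inl rfl)
  · rintro rfl; exact hxpq (.inr rfl)
  by_cases hf : p ⬝ᵥ a f = q ⬝ᵥ a f
  · have := hxG.1.2 f hf
    rw [castVec_dotProduct] at this
    exact .inl (Int.cast_injective this)
  · rcases hvals hxP.1 f with h1 | h1 <;> rcases hvals hp.1 f with h2 | h2 <;>
      rcases hvals hq.1 f with h3 | h3 <;> omega

end

theorem chain_of_neighbouring_divisors_general
    (d : ℕ) (F : Type) [Fintype F]
    (a : F → Fin d → ℤ) (c : F → ℤ)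
    (P : Set (Fin d → ℝ)) (V : Finset (Fin d → ℤ))
    (hlat : P = convexHull ℝ ((fun m : Fin d → ℤ => fun i => (m i : ℝ)) ''
      (V : Set (Fin d → ℤ))))
    (hfacet : P = {x : Fin d → ℝ | ∀ f : F, (c f : ℝ) ≤ ∑ i, x i * (a f i : ℝ)})
    -- compressed:
    (hwidth : ∀ f : F, ∀ x ∈ P, ∑ i, x i * (a f i : ℝ) ≤ c f + 1)
    (k : ℕ) (s : Fin d → ℤ)
    (v₁ v₂ : Fin d → ℤ)
    (hv₁ : (fun i => (v₁ i : ℝ)) ∈ Set.extremePoints ℝ P)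
    (hv₂ : (fun i => (v₂ i : ℝ)) ∈ Set.extremePoints ℝ P)
    -- `v₁` and `v₂` divide `s` in `S(∇)`:
    (hdiv₁ : (fun i => ((s i - v₁ i : ℤ) : ℝ)) ∈ ((k : ℝ) - 1) • P)
    (hdiv₂ : (fun i => ((s i - v₂ i : ℤ) : ℝ)) ∈ ((k : ℝ) - 1) • P) :
    ∃ (j : ℕ) (w : Fin (j + 1) → Fin d → ℤ),
      w 0 = v₁ ∧ w (Fin.last j) = v₂ ∧
      (∀ i, (fun x => (w i x : ℝ)) ∈ Set.extremePoints ℝ P ∧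
        (fun x => ((s x - w i x : ℤ) : ℝ)) ∈ ((k : ℝ) - 1) • P) ∧
      ∀ i : Fin j, Neighbouring P (w i.castSucc) (w i.succ) := by
  by_cases hk : (k : ℝ) - 1 = 0
  · rw [hk] at hdiv₁ hdiv₂
    obtain rfl := (eq_of_castVec_sub_mem_zero_smul ⟨_, hv₁.1⟩ hdiv₁).trans
      (eq_of_castVec_sub_mem_zero_smul ⟨_, hv₁.1⟩ hdiv₂).symm
    exact ⟨0, fun _ => v₁, rfl, rfl, fun _ => ⟨hv₁, hk ▸ hdiv₁⟩, Fin.elim0⟩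
  let Divisors :=
    {u : Fin d → ℤ // castVec u ∈ P.extremePoints ℝ ∧ castVec (s - u) ∈ ((k : ℝ) - 1) • P}
  have hinj : Injective fun (u : Divisors) f => u.1 ⬝ᵥ a f := fun u v huv =>
    Subtype.ext <| eq_of_castVec_mem_extremePoints_of_forall_dotProduct_eq hfacet v.2.1 fun f =>
      (congrFun huv f).symm
  have hstep (p q : Divisors) (hpq : p ≠ q) : Neighbouring P p q ∨
      ∃ u : Divisors, u ≠ p ∧ u ≠ q ∧ ∀ f, u.1 ⬝ᵥ a f = p.1 ⬝ᵥ a f ∨ u.1 ⬝ᵥ a f = q.1 ⬝ᵥ a f := by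
    refine (neighbouring_or_exists_vertex_between hlat hfacet hwidth p.2.1 q.2.1
      (Subtype.coe_ne_coe.2 hpq)).imp_right ?_
    rintro ⟨u, hu, hup, huq, hbetween⟩
    refine ⟨⟨u, hu, mem_smul_of_forall_dotProduct_eq_or_eq hfacet hk p.2.2 q.2.2 fun f => ?_⟩,
      (hup <| congrArg Subtype.val ·), (huq <| congrArg Subtype.val ·), hbetween⟩
    simp only [castVec_dotProduct, sub_dotProduct]
    rcases hbetween f with h | h <;> simp only [h, true_or, or_true]
  obtain ⟨j, w, h0, hlast, hw⟩ := (Relation.reflTransGen_of_forall_exists_between hinj hstep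
    ⟨v₁, hv₁, hdiv₁⟩ ⟨v₂, hv₂, hdiv₂⟩).exists_fin_chain
  exact ⟨j, fun i => w i, congrArg Subtype.val h0, congrArg Subtype.val hlast, fun i => (w i).2, hw⟩

/-- in a compressed polytope, any two vertices dividing `s ∈ S(∇)_k`
are joined by a chain of vertices dividing `s` in which consecutive members are
neighbouring. -/
theorem chain_of_neighbouring_divisors
    (d : ℕ) (F : Type) [Fintype F]
    (a : F → Fin d → ℤ) (c : F → ℤ)
    (P : Set (Fin d → ℝ)) (V : Finset (Fin d → ℤ))
    (hlat : P = convexHull ℝ ((fun m : Fin d → ℤ => fun i => (m i : ℝ)) ''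
      (V : Set (Fin d → ℤ))))
    (hfacet : P = {x : Fin d → ℝ | ∀ f : F, (c f : ℝ) ≤ ∑ i, x i * (a f i : ℝ)})
    (hprim : ∀ f : F, Finset.univ.gcd (a f) = 1)
    -- compressed:
    (hwidth : ∀ f : F, ∀ x ∈ P, ∑ i, x i * (a f i : ℝ) ≤ c f + 1)
    (hwidth' : ∀ f : F, ∃ x ∈ P, ∑ i, x i * (a f i : ℝ) = c f + 1)
    (k : ℕ) (hk : 1 ≤ k) (s : Fin d → ℤ)
    (hs : (fun i => (s i : ℝ)) ∈ (k : ℝ) • P)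
    (v₁ v₂ : Fin d → ℤ)
    (hv₁ : (fun i => (v₁ i : ℝ)) ∈ Set.extremePoints ℝ P)
    (hv₂ : (fun i => (v₂ i : ℝ)) ∈ Set.extremePoints ℝ P)
    -- `v₁` and `v₂` divide `s` in `S(∇)`:
    (hdiv₁ : (fun i => ((s i - v₁ i : ℤ) : ℝ)) ∈ ((k : ℝ) - 1) • P)
    (hdiv₂ : (fun i => ((s i - v₂ i : ℤ) : ℝ)) ∈ ((k : ℝ) - 1) • P) :
    ∃ (j : ℕ) (w : Fin (j + 1) → Fin d → ℤ),
      w 0 = v₁ ∧ w (Fin.last j) = v₂ ∧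
      (∀ i, (fun x => (w i x : ℝ)) ∈ Set.extremePoints ℝ P ∧
        (fun x => ((s x - w i x : ℤ) : ℝ)) ∈ ((k : ℝ) - 1) • P) ∧
      ∀ i : Fin j, Neighbouring P (w i.castSucc) (w i.succ) :=
  chain_of_neighbouring_divisors_general d F a c P V hlat hfacet hwidth k s v₁ v₂ hv₁ hv₂ hdiv₁
    hdiv₂
end

section
/- For n ≥ 2, let K_{n,n} be the complete bipartite graph with bipartition V ∪ W, |V| = |W| = n, let Π be its set of perfect matchings, and define P_n = {x ∈ ℝ^{n²}_{≥0} : Σ_{e∈P} x(e) = 1 for all P ∈ Π}, coordinates indexed by edges. Then for every integer k ≥ 1 and every point x ∈ kP_n there exists v ∈ V ∪ W with supp(m_v) ⊆ supp(x), where m_v is the 0-1 vector of edges incident to v and supp(x) = {e : x(e) > 0}. -/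
open BigOperators Pointwise

/-- The polytope `P_n ⊆ ℝ^{n²}`: nonnegative edge-vectors of `K_{n,n}` summing to `1`
on every perfect matching (perfect matchings of `K_{n,n}` are permutations). -/
def matchingPolytope (n : ℕ) : Set (Fin n × Fin n → ℝ) :=
  {x | (∀ e, 0 ≤ x e) ∧ ∀ σ : Equiv.Perm (Fin n), ∑ i, x (i, σ i) = 1}

/-- The indicator vector of the star of a vertex of `K_{n,n}` (left or right side). -/
def vertexStar (n : ℕ) : Fin n ⊕ Fin n → Fin n × Fin n → ℤ
  | .inl i => fun e => if e.1 = i then 1 else 0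
  | .inr j => fun e => if e.2 = j then 1 else 0

/-- every point of a dilate `k·P_n` has support containing the full
star of some vertex of `K_{n,n}`. -/
theorem star_in_support_of_dilate
    (n : ℕ) (hn : 2 ≤ n) (k : ℕ) (hk : 1 ≤ k)
    (x : Fin n × Fin n → ℝ) (hx : x ∈ (k : ℝ) • matchingPolytope n) :
    ∃ v : Fin n ⊕ Fin n,
      {e : Fin n × Fin n | vertexStar n v e ≠ 0} ⊆ {e | x e ≠ 0} := by
  obtain ⟨y, ⟨hy0, hy1⟩, rfl⟩ := hx
  have hkpos : (0:ℝ) < (k:ℝ) := by exact_mod_cast hk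
  have hnpos : 0 < n := by omega
  haveI : NeZero n := ⟨by omega⟩
  -- it suffices to find a vertex whose star has positive y-values
  have suff : ∀ v : Fin n ⊕ Fin n,
      (∀ e ∈ {e : Fin n × Fin n | vertexStar n v e ≠ 0}, 0 < y e) →
      {e : Fin n × Fin n | vertexStar n v e ≠ 0} ⊆ {e | ((k:ℝ) • y) e ≠ 0} := by
    intro v hv e he
    have := hv e he
    simp only [Set.mem_setOf_eq, Pi.smul_apply, smul_eq_mul]
    positivity
  -- the rectangle identity
  have rect : ∀ i i' j j' : Fin n, i ≠ i' → j ≠ j' →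
      y (i, j) + y (i', j') = y (i, j') + y (i', j) := by
    intro i i' j j' hii hjj
    set b := Equiv.swap i j i' with hb
    have hbj : b ≠ j := fun h => hii ((Equiv.swap i j).injective
      (by rw [Equiv.swap_apply_left]; exact h.symm))
    set σ : Equiv.Perm (Fin n) := Equiv.swap j' b * Equiv.swap i j with hσ
    have hσi : σ i = j := by
      rw [hσ, Equiv.Perm.mul_apply, Equiv.swap_apply_left,
        Equiv.swap_apply_of_ne_of_ne hjj (Ne.symm hbj)]
    have hσi' : σ i' = j' := by
      rw [hσ, Equiv.Perm.mul_apply, ← hb, Equiv.swap_apply_right]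
    set σ' : Equiv.Perm (Fin n) := σ * Equiv.swap i i' with hσ'
    have hσ'i : σ' i = j' := by
      rw [hσ', Equiv.Perm.mul_apply, Equiv.swap_apply_left, hσi']
    have hσ'i' : σ' i' = j := by
      rw [hσ', Equiv.Perm.mul_apply, Equiv.swap_apply_right, hσi]
    have split : ∀ τ : Equiv.Perm (Fin n), ∑ m, y (m, τ m) =
        (∑ m ∈ Finset.univ \ {i, i'}, y (m, τ m)) + (y (i, τ i) + y (i', τ i')) := by
      intro τ
      have h := Finset.sum_sdiff (f := fun m => y (m, τ m))
        (Finset.subset_univ ({i, i'} : Finset (Fin n)))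
      rw [Finset.sum_pair hii] at h
      linarith
    have h1 := hy1 σ
    have h2 := hy1 σ'
    rw [split σ] at h1
    rw [split σ'] at h2
    have hoff : ∑ m ∈ Finset.univ \ {i, i'}, y (m, σ' m)
        = ∑ m ∈ Finset.univ \ {i, i'}, y (m, σ m) := by
      apply Finset.sum_congr rfl
      intro m hm
      simp only [Finset.mem_sdiff, Finset.mem_univ, Finset.mem_insert,
        Finset.mem_singleton, true_and, not_or] at hm
      rw [hσ', Equiv.Perm.mul_apply, Equiv.swap_apply_of_ne_of_ne hm.1 hm.2]
    rw [hσi, hσi'] at h1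
    rw [hoff, hσ'i, hσ'i'] at h2
    linarith
  -- find the minimum of y
  obtain ⟨e0, -, hmin⟩ := Finset.exists_min_image (Finset.univ : Finset (Fin n × Fin n))
    y Finset.univ_nonempty
  obtain ⟨i0, j0⟩ := e0
  have hmin' : ∀ e : Fin n × Fin n, y (i0, j0) ≤ y e := fun e => hmin e (Finset.mem_univ e)
  rcases lt_or_eq_of_le (hy0 (i0, j0)) with hpos | hzero
  · -- all entries positive
    refine ⟨Sum.inl i0, suff _ ?_⟩
    intro e _
    exact lt_of_lt_of_le hpos (hmin' e)
  · -- min is zero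
    by_cases hrow : ∃ i1, 0 < y (i1, j0)
    · obtain ⟨i1, hi1⟩ := hrow
      have hii : i1 ≠ i0 := by
        intro h; rw [h, ← hzero] at hi1; exact lt_irrefl _ hi1
      refine ⟨Sum.inl i1, suff _ ?_⟩
      intro e he
      have he1 : e.1 = i1 := by
        by_contra h
        simp [vertexStar, h] at he
      rcases eq_or_ne e.2 j0 with h2 | h2
      · have : e = (i1, j0) := Prod.ext he1 h2
        rw [this]; exact hi1
      · have := rect i0 i1 j0 e.2 (Ne.symm hii) (Ne.symm h2)
        have h3 := hmin' (i0, e.2)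
        have : e = (i1, e.2) := Prod.ext he1 rfl
        rw [this]
        linarith
    · push_neg at hrow
      by_cases hcol : ∃ j1, 0 < y (i0, j1)
      · obtain ⟨j1, hj1⟩ := hcol
        have hjj : j1 ≠ j0 := by
          intro h; rw [h, ← hzero] at hj1; exact lt_irrefl _ hj1
        refine ⟨Sum.inr j1, suff _ ?_⟩
        intro e he
        have he2 : e.2 = j1 := by
          by_contra h
          simp [vertexStar, h] at he
        rcases eq_or_ne e.1 i0 with h1 | h1
        · have : e = (i0, j1) := Prod.ext h1 he2
          rw [this]; exact hj1
        · have := rect i0 e.1 j0 j1 (Ne.symm h1) (Ne.symm hjj)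
          have h3 := hmin' (e.1, j0)
          have : e = (e.1, j1) := Prod.ext rfl he2
          rw [this]
          linarith
      · -- whole row i0 and column j0 are zero, hence y ≡ 0, contradiction
        push_neg at hcol
        exfalso
        have hall : ∀ e : Fin n × Fin n, y e = 0 := by
          intro ⟨i, j⟩
          rcases eq_or_ne i i0 with h1 | h1
          · subst h1; exact le_antisymm (hcol j) (hy0 _)
          · rcases eq_or_ne j j0 with h2 | h2
            · subst h2; exact le_antisymm (hrow i) (hy0 _)
            · have := rect i0 i j0 j (Ne.symm h1) (Ne.symm h2)
              have ha := le_antisymm (hcol j) (hy0 (i0, j))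
              have hb := le_antisymm (hrow i) (hy0 (i, j0))
              linarith
        have := hy1 (Equiv.refl (Fin n))
        simp only [Equiv.refl_apply, hall, Finset.sum_const_zero] at this
        exact zero_ne_one this
end

section
/- For n ≥ 2 let P_n = {x ∈ ℝ^{n²}_{≥0} : Σ_{e∈P} x(e) = 1 for all perfect matchings P of K_{n,n}}. Then P_n is a lattice polytope whose vertex set is exactly {m_v : v ∈ V ∪ W}, the 2n indicator vectors of edge stars of vertices of K_{n,n}, and P_n is compressed. -/
open BigOperators Pointwise

/-
Every edge lies on a perfect matching, so `P_n` is the unit cube cut by the affine subspace of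
the matching equations; the star vectors are 0/1-points of it, hence vertices.
Conversely, comparing the matchings `σ` and `σ ∘ (i k)` gives the exchange relation
`x(i,j) + x(k,l) = x(i,l) + x(k,j)` on `P_n`, so `x(i,j) = a_i + b_j` with
`a_i = x(i,z) - x(i₀,z) ≥ 0` and `b_j = x(i₀,j) ≥ 0` for `i₀` minimising `x(·,z)`;
the diagonal matching gives `∑ a_i + ∑ b_j = 1`, so `x` is a convex combination of stars.
-/

open Set Equiv

lemma Equiv.Perm.exists_apply_eq_and_apply_eq {α : Type*} [DecidableEq α] {i k j l : α}
    (hik : i ≠ k) (hjl : j ≠ l) : ∃ σ : Perm α, σ i = j ∧ σ k = l := by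
  have hk : swap i j k ≠ j := by
    intro h
    have hki : k = i := by simpa using congrArg (swap i j) h
    exact hik hki.symm
  exact ⟨swap (swap i j k) l * swap i j, by simp [swap_apply_of_ne_of_ne hk.symm hjl], by simp⟩

def matchingWeights (n : ℕ) : (Fin n × Fin n → ℝ) →ₗ[ℝ] (Perm (Fin n) → ℝ) :=
  LinearMap.pi fun σ => ∑ i, LinearMap.proj (i, σ i)

@[simp]
lemma matchingWeights_apply {n : ℕ} (x : Fin n × Fin n → ℝ) (σ : Perm (Fin n)) :
    matchingWeights n x σ = ∑ i, x (i, σ i) := by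
  simp [matchingWeights]

section

variable {n : ℕ} {x : Fin n × Fin n → ℝ}

lemma add_eq_add_of_mem_matchingPolytope (hx : x ∈ matchingPolytope n) (i k j l : Fin n) :
    x (i, j) + x (k, l) = x (i, l) + x (k, j) := by
  rcases eq_or_ne i k with rfl | hik
  · ring
  rcases eq_or_ne j l with rfl | hjl
  · ring
  obtain ⟨σ, hσi, hσk⟩ := Perm.exists_apply_eq_and_apply_eq hik hjl
  have hdiff : ∑ m, (x (m, (σ * swap i k) m) - x (m, σ m))
      = (x (i, l) - x (i, j)) + (x (k, j) - x (k, l)) := by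
    rw [Fintype.sum_eq_add i k hik fun m hm => by
      simp [swap_apply_of_ne_of_ne hm.1 hm.2]]
    simp [hσi, hσk]
  rw [Finset.sum_sub_distrib, hx.2, hx.2] at hdiff
  linarith

lemma apply_le_one_of_mem_matchingPolytope (hx : x ∈ matchingPolytope n) (e : Fin n × Fin n) :
    x e ≤ 1 := by
  obtain ⟨i, j⟩ := e
  calc x (i, j) = x (i, swap i j i) := by rw [swap_apply_left]
    _ ≤ ∑ m, x (m, swap i j m) :=
      Finset.single_le_sum (f := fun m => x (m, swap i j m)) (fun m _ => hx.1 _)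
        (Finset.mem_univ i)
    _ = 1 := hx.2 _

lemma matchingPolytope_eq_Icc_inter_preimage (n : ℕ) :
    matchingPolytope n = Icc 0 1 ∩ matchingWeights n ⁻¹' {1} := by
  ext x
  refine ⟨fun hx => ⟨⟨hx.1, apply_le_one_of_mem_matchingPolytope hx⟩, ?_⟩,
    fun hx => ⟨hx.1.1, fun σ => by simpa using congrFun hx.2 σ⟩⟩
  ext σ
  simpa using hx.2 σ

lemma convex_matchingPolytope (n : ℕ) : Convex ℝ (matchingPolytope n) := by
  rw [matchingPolytope_eq_Icc_inter_preimage]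
  exact (convex_Icc 0 1).inter ((convex_singleton 1).linear_preimage _)

lemma vertexStar_mem_matchingPolytope (v : Fin n ⊕ Fin n) :
    (fun e => (vertexStar n v e : ℝ)) ∈ matchingPolytope n := by
  refine ⟨fun e => by cases v <;> simp [vertexStar, apply_ite], fun σ => ?_⟩
  rcases v with i | j
  · simp [vertexStar, apply_ite]
  · simp [vertexStar, apply_ite, ← eq_symm_apply]

lemma vertexStar_mem_extremePoints (v : Fin n ⊕ Fin n) :
    (fun e => (vertexStar n v e : ℝ)) ∈ extremePoints ℝ (matchingPolytope n) := by
  refine inter_extremePoints_subset_extremePoints_of_subset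
    (fun x hx => (matchingPolytope_eq_Icc_inter_preimage n ▸ hx).1)
    ⟨vertexStar_mem_matchingPolytope v, ?_⟩
  simp only [← pi_univ_Icc, extremePoints_pi, mem_univ_pi, Pi.zero_apply, Pi.one_apply,
    extremePoints_Icc zero_le_one]
  intro e
  rcases v with i | j <;> simp [vertexStar, apply_ite]

lemma sum_smul_vertexStar_apply (w : Fin n ⊕ Fin n → ℝ) (i j : Fin n) :
    (∑ v, w v • fun e => (vertexStar n v e : ℝ)) (i, j) = w (.inl i) + w (.inr j) := by
  simp [Fintype.sum_sum_type, vertexStar, apply_ite, eq_comm]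

lemma mem_convexHull_vertexStar_of_mem_matchingPolytope (hx : x ∈ matchingPolytope n) :
    x ∈ convexHull ℝ ((fun v e => (vertexStar n v e : ℝ)) '' univ) := by
  obtain ⟨z⟩ : Nonempty (Fin n) := by
    rcases isEmpty_or_nonempty (Fin n) with h | h
    · simpa using hx.2 1
    · exact h
  obtain ⟨i₀, -, hmin⟩ := Finset.univ.exists_min_image (fun i => x (i, z)) ⟨z, Finset.mem_univ z⟩
  set w : Fin n ⊕ Fin n → ℝ := Sum.elim (fun i => x (i, z) - x (i₀, z)) (fun j => x (i₀, j))
  have hxw : ∀ i j, x (i, j) = w (.inl i) + w (.inr j) := fun i j => by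
    have := add_eq_add_of_mem_matchingPolytope hx i i₀ j z
    simp only [w, Sum.elim_inl, Sum.elim_inr]
    linarith
  have hw₀ : ∀ v, 0 ≤ w v := by
    rintro (i | j)
    · simpa [w] using hmin i (Finset.mem_univ i)
    · exact hx.1 _
  have hw₁ : ∑ v, w v = 1 := by
    rw [Fintype.sum_sum_type, ← Finset.sum_add_distrib, ← hx.2 1]
    simp [hxw]
  have hx_eq : x = ∑ v, w v • fun e => (vertexStar n v e : ℝ) := by
    funext ⟨i, j⟩
    rw [sum_smul_vertexStar_apply, hxw]
  rw [hx_eq]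
  exact (convex_convexHull ℝ _).sum_mem (fun v _ => hw₀ v) hw₁
    fun v _ => subset_convexHull ℝ _ ⟨v, trivial, rfl⟩

end

theorem matchingPolytope_lattice_vertices_compressed_general (n : ℕ) :
    matchingPolytope n
      = convexHull ℝ ((fun v => fun e => ((vertexStar n v e : ℤ) : ℝ)) ''
          (Set.univ : Set (Fin n ⊕ Fin n))) ∧
    Set.extremePoints ℝ (matchingPolytope n)
      = (fun v => fun e => ((vertexStar n v e : ℤ) : ℝ)) ''
          (Set.univ : Set (Fin n ⊕ Fin n)) ∧
    ∃ W : AffineSubspace ℝ (Fin n × Fin n → ℝ),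
      matchingPolytope n
        = Set.Icc (0 : Fin n × Fin n → ℝ) 1 ∩ (W : Set (Fin n × Fin n → ℝ)) := by
  have hconv : matchingPolytope n = convexHull ℝ ((fun v e => (vertexStar n v e : ℝ)) '' univ) :=
    subset_antisymm (fun x hx => mem_convexHull_vertexStar_of_mem_matchingPolytope hx)
      (convexHull_min (image_subset_iff.2 fun v _ => vertexStar_mem_matchingPolytope v)
        (convex_matchingPolytope n))
  refine ⟨hconv, subset_antisymm ?_ (image_subset_iff.2 fun v _ => vertexStar_mem_extremePoints v),
    (affineSpan ℝ {1}).comap (matchingWeights n).toAffineMap, ?_⟩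
  · rw [hconv]
    exact extremePoints_convexHull_subset
  · rw [AffineSubspace.coe_comap, AffineSubspace.coe_affineSpan_singleton]
    exact matchingPolytope_eq_Icc_inter_preimage n

/-- `P_n` is a lattice polytope whose vertex set is exactly the `2n`
vertex-star indicator vectors, and `P_n` is compressed (it is the intersection of the
unit cube with an affine subspace). -/
theorem matchingPolytope_lattice_vertices_compressed (n : ℕ) (hn : 2 ≤ n) :
    matchingPolytope n
      = convexHull ℝ ((fun v => fun e => ((vertexStar n v e : ℤ) : ℝ)) ''
          (Set.univ : Set (Fin n ⊕ Fin n))) ∧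
    Set.extremePoints ℝ (matchingPolytope n)
      = (fun v => fun e => ((vertexStar n v e : ℤ) : ℝ)) ''
          (Set.univ : Set (Fin n ⊕ Fin n)) ∧
    ∃ W : AffineSubspace ℝ (Fin n × Fin n → ℝ),
      matchingPolytope n
        = Set.Icc (0 : Fin n × Fin n → ℝ) 1 ∩ (W : Set (Fin n × Fin n → ℝ)) :=
  matchingPolytope_lattice_vertices_compressed_general n
end
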